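/- arXiv:2011.01356 — 2 statements merged into one kernel-verified Lean document; each statement's English description precedes it below -/
import Mathlib

section
/- Let b ∈ C with q(b) ≠ 0 and q(b) ∈ O_{F₀}, and set α = ord_{π₀}(q(b)). Then for every integer j with 0 ≤ j ≤ α, the set of type-2 vertex lattices Λ with n(b,Λ) = α − j is finite and has exactly 2qʲ elements. -/
noncomputable section

attribute [local instance] Classical.propDecidable

variable {F : Type} [Field F]

/-- Membership in the valuation ring `O_F = {x : F | x = 0 ∨ v x ≥ 0}`. -/
def inO (v : F → ℤ) (x : F) : Prop := x = 0 ∨ 0 ≤ v x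

/-- The Hermitian form `h(x, y) = x₁ · σ(y₂) + x₂ · σ(y₁)` on `C = F²`. -/
def herm (σ : F →+* F) (x y : F × F) : F := x.1 * σ y.2 + x.2 * σ y.1

/-- The `O_F`-span of two vectors of `C = F²`. -/
def spanL (v : F → ℤ) (u w : F × F) : Set (F × F) :=
  {x | ∃ a b : F, inO v a ∧ inO v b ∧ x = a • u + b • w}

/-- An `O_F`-lattice in `C`: a free rank-2 `O_F`-submodule spanning `C` over `F`. -/
def IsLattice (v : F → ℤ) (Λ : Set (F × F)) : Prop :=
  ∃ u w : F × F, LinearIndependent F ![u, w] ∧ Λ = spanL v u w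

/-- The dual lattice `Λ^♯ = {x ∈ C | h(x, Λ) ⊆ O_F}`. -/
def dualL (σ : F →+* F) (v : F → ℤ) (Λ : Set (F × F)) : Set (F × F) :=
  {x | ∀ y ∈ Λ, inO v (herm σ x y)}

/-- A vertex lattice of type 0: a self-dual lattice. -/
def IsVertex0 (σ : F →+* F) (v : F → ℤ) (Λ : Set (F × F)) : Prop :=
  IsLattice v Λ ∧ dualL σ v Λ = Λ

/-- A vertex lattice of type 2: a lattice with `Λ^♯ = π Λ`
(equivalently `πΛ ⊆ Λ^♯ ⊆ Λ` with `Λ/Λ^♯` two-dimensional over the residue field). -/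
def IsVertex2 (σ : F →+* F) (π : F) (v : F → ℤ) (Λ : Set (F × F)) : Prop :=
  IsLattice v Λ ∧ dualL σ v Λ = (fun x => π • x) '' Λ

/-- A vertex lattice (of type 0 or type 2). -/
def IsVertex (σ : F →+* F) (π : F) (v : F → ℤ) (Λ : Set (F × F)) : Prop :=
  IsVertex0 σ v Λ ∨ IsVertex2 σ π v Λ

/-- `nIs π b Λ n` says that `n = n(b, Λ)` is the largest integer `m` with `π⁻ᵐ b ∈ Λ`. -/
def nIs (π : F) (b : F × F) (Λ : Set (F × F)) (n : ℤ) : Prop :=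
  IsGreatest {m : ℤ | (π ^ (-m)) • b ∈ Λ} n

/-- Adjacency of type-2 vertex lattices: distinct, with intersection a type-0 vertex lattice. -/
def AdjV (σ : F →+* F) (π : F) (v : F → ℤ) (Λ Λ' : Set (F × F)) : Prop :=
  IsVertex2 σ π v Λ ∧ IsVertex2 σ π v Λ' ∧ Λ ≠ Λ' ∧ IsVertex0 σ v (Λ ∩ Λ')

/-- There is a walk of length `k` between `Λ` and `Λ'` in the Bruhat–Tits tree. -/
def WalkN (σ : F →+* F) (π : F) (v : F → ℤ) (k : ℕ) (Λ Λ' : Set (F × F)) : Prop :=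
  ∃ f : ℕ → Set (F × F), f 0 = Λ ∧ f k = Λ' ∧ ∀ i < k, AdjV σ π v (f i) (f (i + 1))

/-- `dGIs σ π v Λ Λ' k` : the graph distance `d_G(Λ, Λ')` equals `k`. -/
def dGIs (σ : F →+* F) (π : F) (v : F → ℤ) (Λ Λ' : Set (F × F)) (k : ℕ) : Prop :=
  IsLeast {j : ℕ | WalkN σ π v j Λ Λ'} k

/-- `P` is a type-2 "hull" of the vertex lattice `Λ`: `P = Λ` when `Λ` has type 2,
and `P` is a type-2 vertex lattice containing `Λ` when `Λ` has type 0. -/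
def HullOf (σ : F →+* F) (π : F) (v : F → ℤ) (Λ P : Set (F × F)) : Prop :=
  (IsVertex2 σ π v Λ ∧ P = Λ) ∨ (IsVertex0 σ v Λ ∧ IsVertex2 σ π v P ∧ Λ ⊆ P)

/-- `DTwice σ π v Λ Λ' m` : twice the tree distance `D(Λ, Λ')` equals `m`
(type-0 vertex lattices are midpoints of edges, contributing `1/2` each). -/
def DTwice (σ : F →+* F) (π : F) (v : F → ℤ) (Λ Λ' : Set (F × F)) (m : ℕ) : Prop :=
  (Λ = Λ' ∧ m = 0) ∨
  (Λ ≠ Λ' ∧ ∃ k : ℕ,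
    IsLeast {j : ℕ | ∃ P Q, HullOf σ π v Λ P ∧ HullOf σ π v Λ' Q ∧ WalkN σ π v j P Q} k ∧
    (m : ℤ) = 2 * k + (if IsVertex0 σ v Λ then 1 else 0) +
      (if IsVertex0 σ v Λ' then 1 else 0))

/-- `g ∈ GL₂(O_F)`. -/
def InGL2O (v : F → ℤ) (g : Matrix (Fin 2) (Fin 2) F) : Prop :=
  (∀ i j, inO v (g i j)) ∧
    ∃ g' : Matrix (Fin 2) (Fin 2) F, (∀ i j, inO v (g' i j)) ∧ g * g' = 1 ∧ g' * g = 1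

/-- Equivalence of Hermitian matrices: `T ≈ T'` iff `gᵗ T ḡ = T'` for some `g ∈ GL₂(O_F)`. -/
def HermEquiv (σ : F →+* F) (v : F → ℤ) (T T' : Matrix (Fin 2) (Fin 2) F) : Prop :=
  ∃ g, InGL2O v g ∧ g.transpose * T * g.map (fun x => σ x) = T'

/-- `u` is a unit of `O_{F₀}`. -/
def IsUnitO₀ (σ : F →+* F) (v : F → ℤ) (u : F) : Prop :=
  σ u = u ∧ u ≠ 0 ∧ v u = 0

/-- `x` is a norm from `F^×`. -/
def IsNorm (σ : F →+* F) (x : F) : Prop := ∃ y : F, y ≠ 0 ∧ x = y * σ y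



/-! ### Auxiliary development for statement15 -/

/-- Bundle of the axioms on the valued field with involution. -/
structure VData (F : Type) [Field F] where
  σ : F →+* F
  π : F
  v : F → ℤ
  hinv : ∀ x, σ (σ x) = x
  hσπ : σ π = -π
  hπ : π ≠ 0
  h2 : (2 : F) ≠ 0
  hvπ : v π = 1
  hv2 : v (2 : F) = 0
  hvσ : ∀ x, v (σ x) = v x
  hvmul : ∀ x y : F, x ≠ 0 → y ≠ 0 → v (x * y) = v x + v y
  hvadd : ∀ x y : F, x ≠ 0 → y ≠ 0 → x + y ≠ 0 → min (v x) (v y) ≤ v (x + y)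
  heven : ∀ x : F, σ x = x → x ≠ 0 → Even (v x)

namespace VData

variable {F : Type} [Field F] (D : VData F)

/-- `vle n x` : `x = 0` or `v x ≥ n`. -/
def vle (n : ℤ) (x : F) : Prop := x = 0 ∨ n ≤ D.v x

/-- `veq n x` : `x ≠ 0` and `v x = n`. -/
def veq (n : ℤ) (x : F) : Prop := x ≠ 0 ∧ D.v x = n

variable {D}

lemma inO_iff (x : F) : inO D.v x ↔ D.vle 0 x := Iff.rfl

lemma vle_zero (n : ℤ) : D.vle n 0 := Or.inl rfl

lemma vle_of_veq {n : ℤ} {x : F} (h : D.veq n x) : D.vle n x := Or.inr h.2.ge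

lemma veq.ne {n : ℤ} {x : F} (h : D.veq n x) : x ≠ 0 := h.1

lemma vle.mono {m n : ℤ} {x : F} (hmn : m ≤ n) (h : D.vle n x) : D.vle m x := by
  rcases h with h | h
  · exact Or.inl h
  · exact Or.inr (le_trans hmn h)

lemma v_one : D.v 1 = 0 := by
  have := D.hvmul 1 1 one_ne_zero one_ne_zero
  simp at this; omega

lemma v_neg_one : D.v (-1 : F) = 0 := by
  have := D.hvmul (-1) (-1) (by simp) (by simp)
  simp [v_one] at this; omega

lemma v_neg (x : F) : D.v (-x) = D.v x := by
  by_cases hx : x = 0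
  · simp [hx]
  · have := D.hvmul (-1) x (by simp) hx
    simp [v_neg_one] at this; omega

lemma v_inv {x : F} (hx : x ≠ 0) : D.v x⁻¹ = -D.v x := by
  have := D.hvmul x x⁻¹ hx (inv_ne_zero hx)
  rw [mul_inv_cancel₀ hx, v_one] at this; omega

lemma vle.neg {n : ℤ} {x : F} (h : D.vle n x) : D.vle n (-x) := by
  rcases h with h | h
  · simp [h, vle_zero]
  · exact Or.inr (by rw [v_neg]; exact h)

lemma vle.add {n : ℤ} {x y : F} (hx : D.vle n x) (hy : D.vle n y) : D.vle n (x + y) := by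
  by_cases hx0 : x = 0
  · simpa [hx0] using hy
  by_cases hy0 : y = 0
  · simpa [hy0] using hx
  rcases hx with hx | hx
  · exact absurd hx hx0
  rcases hy with hy | hy
  · exact absurd hy hy0
  by_cases hxy : x + y = 0
  · exact Or.inl hxy
  · exact Or.inr (le_trans (le_min hx hy) (D.hvadd x y hx0 hy0 hxy))

lemma vle.sub {n : ℤ} {x y : F} (hx : D.vle n x) (hy : D.vle n y) : D.vle n (x - y) := by
  rw [sub_eq_add_neg]; exact hx.add hy.neg

lemma vle.mul {m n : ℤ} {x y : F} (hx : D.vle m x) (hy : D.vle n y) :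
    D.vle (m + n) (x * y) := by
  rcases hx with hx | hx
  · simp [hx, vle_zero]
  rcases hy with hy | hy
  · simp [hy, vle_zero]
  by_cases hx0 : x = 0
  · simp [hx0, vle_zero]
  by_cases hy0 : y = 0
  · simp [hy0, vle_zero]
  exact Or.inr (by rw [D.hvmul x y hx0 hy0]; omega)

lemma veq.mul {m n : ℤ} {x y : F} (hx : D.veq m x) (hy : D.veq n y) :
    D.veq (m + n) (x * y) :=
  ⟨mul_ne_zero hx.1 hy.1, by rw [D.hvmul x y hx.1 hy.1, hx.2, hy.2]⟩

lemma veq.inv {m : ℤ} {x : F} (hx : D.veq m x) : D.veq (-m) x⁻¹ :=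
  ⟨inv_ne_zero hx.1, by rw [v_inv hx.1, hx.2]⟩

lemma veq_one : D.veq 0 (1 : F) := ⟨one_ne_zero, v_one⟩

lemma veq_pi : D.veq 1 D.π := ⟨D.hπ, D.hvπ⟩

lemma veq_two : D.veq 0 (2 : F) := ⟨D.h2, D.hv2⟩

lemma veq.neg {m : ℤ} {x : F} (hx : D.veq m x) : D.veq m (-x) :=
  ⟨neg_ne_zero.2 hx.1, by rw [v_neg, hx.2]⟩

lemma veq_pi_pow (k : ℕ) : D.veq k (D.π ^ k) := by
  induction k with
  | zero => simpa using (veq_one : D.veq 0 (1:F))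
  | succ n ih => rw [pow_succ]; exact (by simpa using ih.mul veq_pi : D.veq (n+1) _)

lemma veq_pi_zpow (m : ℤ) : D.veq m (D.π ^ m) := by
  rcases le_or_gt 0 m with h | h
  · lift m to ℕ using h
    rw [zpow_natCast]; exact veq_pi_pow m
  · have h1 : D.π ^ m = (D.π ^ (-m).toNat)⁻¹ := by
      rw [← zpow_natCast, Int.toNat_of_nonneg (by omega), ← zpow_neg, neg_neg]
    rw [h1]
    have := (veq_pi_pow (-m).toNat (D := D)).inv
    rwa [show -(((-m).toNat : ℤ)) = m by omega] at this

/-- Multiplying by an element of exact valuation `m` shifts `vle` by `m`. -/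
lemma vle_mul_veq_iff {m n : ℤ} {y : F} (hy : D.veq m y) (x : F) :
    D.vle (n + m) (x * y) ↔ D.vle n x := by
  constructor
  · intro h
    have := h.mul (vle_of_veq hy.inv)
    rw [mul_assoc, mul_inv_cancel₀ hy.1, mul_one] at this
    exact this.mono (by omega)
  · intro h
    exact h.mul (vle_of_veq hy)

/-- Exactness : adding something of strictly bigger valuation keeps exact valuation. -/
lemma veq.add_vlt {m n : ℤ} {x y : F} (hx : D.veq m x) (hy : D.vle n y) (hmn : m < n) :
    D.veq m (x + y) := by
  by_cases hy0 : y = 0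
  · simpa [hy0] using hx
  rcases hy with hy | hy
  · exact absurd hy hy0
  have hxy : x + y ≠ 0 := by
    intro h
    have hyx : y = -x := by linear_combination h
    rw [hyx, v_neg, hx.2] at hy
    omega
  constructor
  · exact hxy
  have h1 : m ≤ D.v (x + y) := le_trans (by rw [hx.2]; exact le_min le_rfl (by omega))
      (D.hvadd x y hx.1 hy0 hxy)
  have h2 : D.v x ≥ min (D.v (x + y)) (D.v (-y)) := by
    have := D.hvadd (x + y) (-y) hxy (neg_ne_zero.2 hy0) (by simpa using hx.1)
    simpa using this
  rw [v_neg, hx.2] at h2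
  omega

lemma vlt_add_veq {m n : ℤ} {x y : F} (hx : D.vle n x) (hy : D.veq m y) (hmn : m < n) :
    D.veq m (x + y) := by
  rw [add_comm]; exact hy.add_vlt hx hmn

lemma veq.not_vle {m n : ℤ} {x : F} (hx : D.veq m x) (hmn : m < n) : ¬ D.vle n x := by
  rintro (h | h)
  · exact hx.1 h
  · rw [hx.2] at h; omega

/-- `σ` preserves `vle`. -/
lemma vle.sigma {n : ℤ} {x : F} (h : D.vle n x) : D.vle n (D.σ x) := by
  rcases h with h | h
  · simp [h, vle_zero]
  · exact Or.inr (by rw [D.hvσ]; exact h)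

lemma sigma_ne {x : F} (h : x ≠ 0) : D.σ x ≠ 0 := by
  intro h0
  have := D.hinv x
  rw [h0, map_zero] at this
  exact h this.symm

lemma veq.sigma {n : ℤ} {x : F} (h : D.veq n x) : D.veq n (D.σ x) :=
  ⟨sigma_ne h.1, by rw [D.hvσ, h.2]⟩

lemma sigma_two : D.σ 2 = 2 := by
  have : ((2:ℕ) : F) = (2 : F) := by norm_num
  rw [← this, map_natCast]

lemma sigma_neg_one : D.σ (-1) = -1 := by simp

/-- even-valuation upgrade for `σ`-fixed elements. -/
lemma vle_even {k : ℤ} {x : F} (hfix : D.σ x = x) (h : D.vle (2*k - 1) x) :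
    D.vle (2*k) x := by
  rcases h with h | h
  · simp [h, vle_zero]
  by_cases hx : x = 0
  · simp [hx, vle_zero]
  obtain ⟨r, hr⟩ := D.heven x hfix hx
  exact Or.inr (by omega)

/-- anti-fixed elements divided by `π` are fixed. -/
lemma antifix_div_pi {x : F} (h : D.σ x = -x) : D.σ (x * D.π⁻¹) = x * D.π⁻¹ := by
  rw [map_mul, h, map_inv₀, D.hσπ]
  field_simp

/-- `σ x ≡ x mod π` for integral `x`. -/
lemma vle_sigma_sub {x : F} (h : D.vle 0 x) : D.vle 1 (D.σ x - x) := by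
  have hanti : D.σ (D.σ x - x) = -(D.σ x - x) := by
    rw [map_sub, D.hinv]; ring
  have h0 : D.vle 0 (D.σ x - x) := h.sigma.sub h
  by_cases hz : D.σ x - x = 0
  · simp [hz, vle_zero]
  have hfix := antifix_div_pi (D := D) hanti
  have hne : (D.σ x - x) * D.π⁻¹ ≠ 0 := mul_ne_zero hz (inv_ne_zero D.hπ)
  obtain ⟨r, hr⟩ := D.heven _ hfix hne
  have hv : D.v ((D.σ x - x) * D.π⁻¹) = D.v (D.σ x - x) - 1 := by
    rw [D.hvmul _ _ hz (inv_ne_zero D.hπ), v_inv D.hπ, D.hvπ]; ring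
  rcases h0 with h0 | h0
  · exact absurd h0 hz
  · exact Or.inr (by omega)

end VData

namespace VData

variable {F : Type} [Field F] {D : VData F}

lemma div_pi_inO_iff (x : F) : inO D.v (x / D.π) ↔ D.vle 1 x := by
  rw [div_eq_mul_inv, inO_iff]
  have := vle_mul_veq_iff (D := D) (n := 1) (veq_pi.inv) x
  rw [show (1 : ℤ) + -1 = 0 by ring] at this
  exact this

section R
variable (R : Finset F) (hRO : ∀ r ∈ R, inO D.v r)
  (hRrep : ∀ x : F, inO D.v x → ∃! r, r ∈ R ∧ inO D.v ((x - r) / D.π))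

include hRrep in
lemma rep_exists {x : F} (hx : D.vle 0 x) : ∃ r ∈ R, D.vle 1 (x - r) := by
  obtain ⟨r, ⟨hrR, hr⟩, -⟩ := hRrep x hx
  exact ⟨r, hrR, (div_pi_inO_iff _).1 hr⟩

include hRO hRrep in
lemma rep_distinct {r r' : F} (hr : r ∈ R) (hr' : r' ∈ R) (hne : r ≠ r') :
    D.veq 0 (r - r') := by
  have h0 : D.vle 0 (r - r') := ((inO_iff r).1 (hRO r hr)).sub ((inO_iff r').1 (hRO r' hr'))
  have h1 : ¬ D.vle 1 (r - r') := by
    intro h1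
    apply hne
    obtain ⟨u, hu, huniq⟩ := hRrep r ((inO_iff r).1 (hRO r hr))
    have e1 : r = u := huniq r ⟨hr, by rw [sub_self, zero_div]; exact Or.inl rfl⟩
    have e2 : r' = u := huniq r' ⟨hr', (div_pi_inO_iff _).2 h1⟩
    rw [e1, e2]
  refine ⟨sub_ne_zero.2 hne, ?_⟩
  rcases h0 with h0 | h0
  · exact absurd (Or.inl h0) h1
  · have : ¬ (1 : ℤ) ≤ D.v (r - r') := fun h => h1 (Or.inr h)
    omega

end R

/-- fixed representative attached to `r`. -/
def fixel (D : VData F) (r : F) : F := (r + D.σ r) * (2:F)⁻¹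

lemma fixel_fixed (r : F) : D.σ (D.fixel r) = D.fixel r := by
  unfold fixel
  rw [map_mul, map_add, D.hinv, map_inv₀, sigma_two]
  ring

lemma fixel_vle {r : F} (h : D.vle 0 r) : D.vle 0 (D.fixel r) := by
  have := (h.add h.sigma).mul (vle_of_veq (veq_two (D := D)).inv)
  simpa [fixel] using this

lemma fixel_sub_self {r : F} (h : D.vle 0 r) : D.vle 1 (D.fixel r - r) := by
  have h1 : D.fixel r - r = (D.σ r - r) * (2:F)⁻¹ := by
    have h2 : (2:F) ≠ 0 := D.h2
    unfold fixel; field_simp; ring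
  rw [h1]
  have := (vle_sigma_sub h).mul (vle_of_veq (veq_two (D := D)).inv)
  simpa using this

lemma fixel_distinct {r r' : F} (h0 : D.veq 0 (r - r')) (hr : D.vle 0 r) (hr' : D.vle 0 r') :
    D.veq 0 (D.fixel r - D.fixel r') := by
  have key : D.fixel r - D.fixel r' = (r - r') + ((D.fixel r - r) - (D.fixel r' - r')) := by ring
  rw [key]
  exact h0.add_vlt ((fixel_sub_self hr).sub (fixel_sub_self hr')) (by omega)

lemma sigma_pi_pow_even (i : ℕ) : D.σ (D.π ^ (2*i)) = D.π ^ (2*i) := by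
  rw [map_pow, D.hσπ]
  exact Even.neg_pow (by exact ⟨i, by ring⟩) _

/-- partial digit sums `Σ_{k<i} π^{2k} f k`. -/
def dsum (D : VData F) (f : ℕ → F) : ℕ → F
  | 0 => 0
  | (i+1) => D.dsum f i + D.π ^ (2*i) * f i

lemma dsum_succ (f : ℕ → F) (i : ℕ) :
    D.dsum f (i+1) = D.dsum f i + D.π ^ (2*i) * f i := rfl

lemma dsum_congr {f g : ℕ → F} (i : ℕ) (h : ∀ k < i, f k = g k) :
    D.dsum f i = D.dsum g i := by
  induction i with
  | zero => rfl
  | succ n ih =>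
    unfold dsum
    rw [ih (fun k hk => h k (by omega)), h n (by omega)]

lemma dsum_fixed {f : ℕ → F} (i : ℕ) (h : ∀ k < i, D.σ (f k) = f k) :
    D.σ (D.dsum f i) = D.dsum f i := by
  induction i with
  | zero => simp [dsum]
  | succ n ih =>
    unfold dsum
    rw [map_add, map_mul, ih (fun k hk => h k (by omega)), sigma_pi_pow_even, h n (by omega)]

lemma dsum_vle {f : ℕ → F} (i : ℕ) (h : ∀ k < i, D.vle 0 (f k)) :
    D.vle 0 (D.dsum f i) := by
  induction i with
  | zero => exact vle_zero 0
  | succ n ih =>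
    refine (ih (fun k hk => h k (by omega))).add ?_
    have := (vle_of_veq (veq_pi_pow (D := D) (2*n))).mul (h n (by omega))
    exact this.mono (by omega)

end VData

namespace VData

variable {F : Type} [Field F] {D : VData F}

lemma digits_exist (R : Finset F) (hRO : ∀ r ∈ R, inO D.v r)
    (hRrep : ∀ x : F, inO D.v x → ∃! r, r ∈ R ∧ inO D.v ((x - r) / D.π))
    {y : F} (hfix : D.σ y = y) (hy : D.vle 0 y) (n : ℕ) :
    ∃ f : ℕ → F, (∀ k, k < n → f k ∈ R) ∧
      D.vle (2*n) (y - D.dsum (fun k => D.fixel (f k)) n) := by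
  induction n with
  | zero => exact ⟨fun _ => 0, fun k hk => absurd hk (by omega), by simpa [dsum] using hy⟩
  | succ n ih =>
    obtain ⟨f, hfR, hvle⟩ := ih
    set P := D.dsum (fun k => D.fixel (f k)) n with hP
    set z := (y - P) * (D.π ^ (2*n))⁻¹ with hz
    have hPfix : D.σ P = P := dsum_fixed n (fun k _ => fixel_fixed (f k))
    have hzfix : D.σ z = z := by
      rw [hz, map_mul, map_sub, hfix, hPfix, map_inv₀, sigma_pi_pow_even]
    have hzvle : D.vle 0 z := by
      have := (vle_mul_veq_iff (D := D) (n := 2*n) (veq_pi_pow (2*n)).inv (y - P)).2 hvle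
      rw [show (2*(n:ℤ)) + -((2*n : ℕ) : ℤ) = 0 by push_cast; ring] at this
      exact this
    obtain ⟨r, hrR, hrz⟩ := rep_exists R hRrep hzvle
    refine ⟨Function.update f n r, ?_, ?_⟩
    · intro k hk
      rcases eq_or_ne k n with rfl | hne
      · simp [hrR]
      · rw [Function.update_of_ne hne]; exact hfR k (by omega)
    · have hds : D.dsum (fun k => D.fixel (Function.update f n r k)) (n+1)
          = P + D.π ^ (2*n) * D.fixel r := by
        rw [dsum_succ, dsum_congr n (fun k hk => by rw [Function.update_of_ne (by omega)]),
          Function.update_self]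
      rw [hds]
      have hyP : y - P = D.π ^ (2*n) * z := by
        rw [hz, mul_comm, mul_assoc, inv_mul_cancel₀ (veq_pi_pow (D:=D) (2*n)).ne, mul_one]
      have key : y - (P + D.π ^ (2*n) * D.fixel r) = D.π ^ (2*n) * (z - D.fixel r) := by
        rw [mul_sub, ← hyP]; ring
      rw [key]
      have hsub : D.vle 2 (z - D.fixel r) := by
        have h1 : D.vle 1 (z - D.fixel r) := by
          have : z - D.fixel r = (z - r) - (D.fixel r - r) := by ring
          rw [this]
          exact hrz.sub (fixel_sub_self ((inO_iff r).1 (hRO r hrR)))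
        have hfixd : D.σ (z - D.fixel r) = z - D.fixel r := by
          rw [map_sub, hzfix, fixel_fixed]
        exact vle_even (k := 1) hfixd (by simpa using h1)
      have := (vle_of_veq (veq_pi_pow (D := D) (2*n))).mul hsub
      exact this.mono (by push_cast; omega)

lemma dsum_sub_veq {f g : ℕ → F} {k₀ i : ℕ}
    (hf : ∀ k < i, D.vle 0 (f k)) (hg : ∀ k < i, D.vle 0 (g k))
    (hk : k₀ < i) (hagree : ∀ k < k₀, f k = g k) (hdiff : D.veq 0 (f k₀ - g k₀)) :
    D.veq (2*k₀) (D.dsum f i - D.dsum g i) := by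
  have base : D.veq (2*k₀) (D.dsum f (k₀+1) - D.dsum g (k₀+1)) := by
    rw [dsum_succ, dsum_succ, dsum_congr k₀ hagree]
    have : D.dsum g k₀ + D.π ^ (2*k₀) * f k₀ - (D.dsum g k₀ + D.π ^ (2*k₀) * g k₀)
        = D.π ^ (2*k₀) * (f k₀ - g k₀) := by ring
    rw [this]
    simpa using (veq_pi_pow (D := D) (2*k₀)).mul hdiff
  have main : ∀ m, k₀ + 1 ≤ m → (∀ k < m, D.vle 0 (f k)) → (∀ k < m, D.vle 0 (g k)) →
      D.veq (2*k₀) (D.dsum f m - D.dsum g m) := by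
    intro m hm
    induction m, hm using Nat.le_induction with
    | base => exact fun _ _ => base
    | succ m hm ih =>
      intro hfm hgm
      rw [dsum_succ, dsum_succ]
      have key : D.dsum f m + D.π ^ (2*m) * f m - (D.dsum g m + D.π ^ (2*m) * g m)
          = (D.dsum f m - D.dsum g m) + D.π ^ (2*m) * (f m - g m) := by ring
      rw [key]
      have h6 : D.vle (2*(m:ℤ)) (D.π ^ (2*m) * (f m - g m)) := by
        have := (vle_of_veq (veq_pi_pow (D := D) (2*m))).mul
          ((hfm m (by omega)).sub (hgm m (by omega)))
        simpa using this
      exact (ih (fun k hks => hfm k (by omega)) (fun k hks => hgm k (by omega))).add_vlt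
        h6 (by omega)
  exact main i (by omega) hf hg

lemma digits_unique (R : Finset F) (hRO : ∀ r ∈ R, inO D.v r)
    (hRrep : ∀ x : F, inO D.v x → ∃! r, r ∈ R ∧ inO D.v ((x - r) / D.π))
    {f g : ℕ → F} {n : ℕ} (hfR : ∀ k < n, f k ∈ R) (hgR : ∀ k < n, g k ∈ R)
    (h : D.vle (2*n) (D.dsum (fun k => D.fixel (f k)) n - D.dsum (fun k => D.fixel (g k)) n)) :
    ∀ k < n, f k = g k := by
  by_contra hcon
  push_neg at hcon
  have hex : ∃ k, k < n ∧ f k ≠ g k := hcon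
  classical
  let k₀ := Nat.find hex
  obtain ⟨hk₀n, hk₀ne⟩ := Nat.find_spec hex
  have hagree : ∀ k < k₀, D.fixel (f k) = D.fixel (g k) := by
    intro k hk
    have h := Nat.find_min hex hk
    have hfg : f k = g k := by
      by_contra hne
      exact h ⟨by omega, hne⟩
    rw [hfg]
  have hdiff : D.veq 0 (D.fixel (f k₀) - D.fixel (g k₀)) :=
    fixel_distinct (rep_distinct R hRO hRrep (hfR k₀ hk₀n) (hgR k₀ hk₀n) hk₀ne)
      ((inO_iff _).1 (hRO _ (hfR k₀ hk₀n))) ((inO_iff _).1 (hRO _ (hgR k₀ hk₀n)))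
  have := dsum_sub_veq (f := fun k => D.fixel (f k)) (g := fun k => D.fixel (g k))
    (fun k hk => fixel_vle ((inO_iff _).1 (hRO _ (hfR k hk))))
    (fun k hk => fixel_vle ((inO_iff _).1 (hRO _ (hgR k hk)))) hk₀n hagree hdiff
  exact this.not_vle (by omega) h

/-! ### norm-one elements `Mu y` -/

/-- `Mu y = (1+πy)/(1-πy)`, a norm-one element for `σ`-fixed `y`. -/
def Mu (D : VData F) (y : F) : F := (1 + D.π * y) * (1 - D.π * y)⁻¹

lemma Mu_zero : D.Mu 0 = 1 := by simp [Mu]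

lemma piy_vle {y : F} (hy : D.vle 0 y) : D.vle 1 (D.π * y) := by
  simpa using (vle_of_veq (veq_pi (D := D))).mul hy

lemma one_add_piy {y : F} (hy : D.vle 0 y) : D.veq 0 (1 + D.π * y) :=
  (veq_one (D := D)).add_vlt (piy_vle hy) (by omega)

lemma one_sub_piy {y : F} (hy : D.vle 0 y) : D.veq 0 (1 - D.π * y) :=
  (veq_one (D := D)).add_vlt (by simpa [sub_eq_add_neg] using (piy_vle hy).neg) (by omega)
    |>.imp (by rw [sub_eq_add_neg]; exact fun h => h) (by rw [sub_eq_add_neg]; exact fun h => h)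

lemma Mu_veq {y : F} (hy : D.vle 0 y) : D.veq 0 (D.Mu y) := by
  simpa [Mu] using (one_add_piy hy).mul (one_sub_piy hy).inv

lemma sigma_Mu {y : F} (hfy : D.σ y = y) :
    D.σ (D.Mu y) = (1 - D.π * y) * (1 + D.π * y)⁻¹ := by
  unfold Mu
  simp only [map_mul, map_inv₀, map_add, map_sub, map_one, D.hσπ, hfy]
  try ring_nf

lemma Mu_norm {y : F} (hfy : D.σ y = y) (hy : D.vle 0 y) : D.Mu y * D.σ (D.Mu y) = 1 := by
  have h1 := (one_add_piy hy).ne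
  have h2 := (one_sub_piy hy).ne
  rw [sigma_Mu hfy]
  unfold Mu
  field_simp
  try ring

lemma Mu_ratio_eq {y y' : F} (hy : D.vle 0 y) (hy' : D.vle 0 y') :
    D.Mu y * (D.Mu y')⁻¹ - 1 = (y - y') * (2 * D.π * ((1 - D.π * y) * (1 + D.π * y'))⁻¹) := by
  have h1 := (one_add_piy hy).ne
  have h2 := (one_sub_piy hy).ne
  have h3 := (one_add_piy hy').ne
  have h4 := (one_sub_piy hy').ne
  unfold Mu
  field_simp
  ring

lemma Mu_ratio_vle_iff {n : ℤ} {y y' : F} (hy : D.vle 0 y) (hy' : D.vle 0 y') :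
    D.vle (n + 1) (D.Mu y * (D.Mu y')⁻¹ - 1) ↔ D.vle n (y - y') := by
  rw [Mu_ratio_eq hy hy']
  refine vle_mul_veq_iff ?_ _
  have : D.veq 1 (2 * D.π) := by simpa using (veq_two (D := D)).mul (veq_pi (D := D))
  simpa using this.mul ((one_sub_piy hy).mul (one_add_piy hy')).inv

lemma Mu_mul_eq {y y' : F} (hy : D.vle 0 y) (hy' : D.vle 0 y') :
    D.Mu y * D.Mu y' = D.Mu ((y + y') * (1 + D.π^2 * y * y')⁻¹) ∧
    D.veq 0 (1 + D.π^2 * y * y') := by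
  have hden : D.veq 0 (1 + D.π^2 * y * y') := by
    have h5 : D.vle 2 (D.π^2 * y * y') := by
      have := ((vle_of_veq (veq_pi_pow (D := D) 2)).mul hy).mul hy'
      simpa [mul_assoc] using this
    exact (veq_one (D := D)).add_vlt h5 (by omega)
  have hd : (1 + D.π^2 * y * y') ≠ 0 := hden.ne
  refine ⟨?_, hden⟩
  set Y := (y + y') * (1 + D.π^2 * y * y')⁻¹ with hY
  have h1 := (one_add_piy hy).ne
  have h2 := (one_sub_piy hy).ne
  have h3 := (one_add_piy hy').ne
  have h4 := (one_sub_piy hy').ne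
  have hplus : 1 + D.π * Y = (1 + D.π * y) * (1 + D.π * y') * (1 + D.π^2 * y * y')⁻¹ := by
    rw [hY]; field_simp; ring
  have hminus : 1 - D.π * Y = (1 - D.π * y) * (1 - D.π * y') * (1 + D.π^2 * y * y')⁻¹ := by
    rw [hY]; field_simp; ring
  unfold Mu
  rw [hplus, hminus]
  field_simp

end VData

namespace VData

variable {F : Type} [Field F] {D : VData F}

/-- `q(c) = h(c,c)`. -/
def Qc (D : VData F) (c : F × F) : F := herm D.σ c c

/-- generator of the orthogonal complement of `c`. -/
def evec (D : VData F) (c : F × F) : F × F := (D.σ c.1, -(D.σ c.2))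

/-- `c`-coordinate of `x` in the basis `(c, evec c)`. -/
def sC (D : VData F) (c x : F × F) : F := herm D.σ x c * (D.Qc c)⁻¹

/-- `evec`-coordinate of `x` in the basis `(c, evec c)`. -/
def tC (D : VData F) (c x : F × F) : F := -(herm D.σ x (D.evec c)) * (D.Qc c)⁻¹

section coords
variable {c : F × F} (hQ : D.Qc c ≠ 0)

lemma herm_sigma (x y : F × F) : D.σ (herm D.σ x y) = herm D.σ y x := by
  simp only [herm, map_add, map_mul, D.hinv]
  ring

lemma Qc_fixed : D.σ (D.Qc c) = D.Qc c := herm_sigma c c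

lemma herm_comb_left (a b : F) (x y z : F × F) :
    herm D.σ (a • x + b • y) z = a * herm D.σ x z + b * herm D.σ y z := by
  simp only [herm, Prod.fst_add, Prod.snd_add, Prod.smul_fst, Prod.smul_snd, smul_eq_mul]
  ring

lemma herm_comb_right (a b : F) (x y z : F × F) :
    herm D.σ x (a • y + b • z) = D.σ a * herm D.σ x y + D.σ b * herm D.σ x z := by
  simp only [herm, Prod.fst_add, Prod.snd_add, Prod.smul_fst, Prod.smul_snd, smul_eq_mul,
    map_add, map_mul]
  ring

lemma herm_smul_left (a : F) (x z : F × F) :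
    herm D.σ (a • x) z = a * herm D.σ x z := by
  simp only [herm, Prod.smul_fst, Prod.smul_snd, smul_eq_mul]
  ring

lemma herm_ce : herm D.σ c (D.evec c) = 0 := by
  simp only [herm, evec, map_neg, D.hinv]
  ring

lemma herm_ec : herm D.σ (D.evec c) c = 0 := by
  simp only [herm, evec]
  ring

lemma herm_ee : herm D.σ (D.evec c) (D.evec c) = -(D.Qc c) := by
  simp only [herm, evec, Qc, map_neg, D.hinv]
  ring

include hQ in
lemma coord_id (x : F × F) : x = (D.sC c x) • c + (D.tC c x) • (D.evec c) := by
  have e1 : D.σ (D.σ c.2) = c.2 := D.hinv _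
  have e2 : D.σ (D.σ c.1) = c.1 := D.hinv _
  have hQ' : D.σ c.2 * c.1 + D.σ c.1 * c.2 ≠ 0 := by
    intro h
    apply hQ
    unfold Qc herm
    linear_combination h
  have hcancel := mul_inv_cancel₀ hQ'
  refine Prod.ext ?_ ?_
  · simp only [sC, tC, herm, evec, Qc, Prod.fst_add, Prod.snd_add, Prod.smul_fst,
      Prod.smul_snd, smul_eq_mul, map_neg, e1, e2]
    linear_combination (-x.1) * hcancel
  · simp only [sC, tC, herm, evec, Qc, Prod.fst_add, Prod.snd_add, Prod.smul_fst,
      Prod.smul_snd, smul_eq_mul, map_neg, e1, e2]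
    linear_combination (-x.2) * hcancel

lemma sC_c : D.sC c c = (D.Qc c) * (D.Qc c)⁻¹ := rfl

include hQ in
lemma sC_c' : D.sC c c = 1 := by rw [sC_c, mul_inv_cancel₀ hQ]

lemma tC_c : D.tC c c = 0 := by
  simp [tC, herm_ce]

lemma sC_e : D.sC c (D.evec c) = 0 := by
  simp [sC, herm_ec]

include hQ in
lemma tC_e : D.tC c (D.evec c) = 1 := by
  simp [tC, herm_ee, mul_inv_cancel₀ hQ]

lemma sC_comb (a b : F) (x y : F × F) :
    D.sC c (a • x + b • y) = a * D.sC c x + b * D.sC c y := by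
  simp only [sC, herm_comb_left]
  ring

lemma tC_comb (a b : F) (x y : F × F) :
    D.tC c (a • x + b • y) = a * D.tC c x + b * D.tC c y := by
  simp only [tC, herm_comb_left]
  ring

include hQ in
lemma herm_xc (x : F × F) : herm D.σ x c = D.sC c x * D.Qc c := by
  rw [sC, mul_assoc, inv_mul_cancel₀ hQ, mul_one]

include hQ in
lemma herm_xe (x : F × F) : herm D.σ x (D.evec c) = -(D.tC c x) * D.Qc c := by
  rw [tC]
  field_simp

include hQ in
lemma herm_xw (x w : F × F) :
    herm D.σ x w = (D.sC c x * D.σ (D.sC c w) - D.tC c x * D.σ (D.tC c w)) * D.Qc c := by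
  conv_lhs => rw [coord_id hQ w]
  rw [herm_comb_right, herm_xc hQ, herm_xe hQ]
  ring

include hQ in
lemma herm_ww (w : F × F) :
    herm D.σ w w = (D.sC c w * D.σ (D.sC c w) - D.tC c w * D.σ (D.tC c w)) * D.Qc c :=
  herm_xw hQ w w

end coords

end VData

namespace VData

variable {F : Type} [Field F] {D : VData F}

lemma mem_spanL_left (u w : F × F) : u ∈ spanL D.v u w :=
  ⟨1, 0, Or.inr (by rw [v_one (D := D)]), Or.inl rfl, by simp⟩

lemma mem_spanL_right (u w : F × F) : w ∈ spanL D.v u w :=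
  ⟨0, 1, Or.inl rfl, Or.inr (by rw [v_one (D := D)]), by simp⟩

lemma spanL_comb {u w x y : F × F} {a b : F} (hx : x ∈ spanL D.v u w)
    (hy : y ∈ spanL D.v u w) (ha : D.vle 0 a) (hb : D.vle 0 b) :
    a • x + b • y ∈ spanL D.v u w := by
  obtain ⟨a₁, b₁, ha₁, hb₁, rfl⟩ := hx
  obtain ⟨a₂, b₂, ha₂, hb₂, rfl⟩ := hy
  refine ⟨a*a₁ + b*a₂, a*b₁ + b*b₂, ?_, ?_, ?_⟩
  · exact (inO_iff _).2 (((ha.mul ((inO_iff _).1 ha₁)).add (hb.mul ((inO_iff _).1 ha₂))).mono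
      (by omega))
  · exact (inO_iff _).2 (((ha.mul ((inO_iff _).1 hb₁)).add (hb.mul ((inO_iff _).1 hb₂))).mono
      (by omega))
  · refine Prod.ext ?_ ?_ <;>
    · simp only [Prod.fst_add, Prod.snd_add, Prod.smul_fst, Prod.smul_snd, smul_eq_mul]
      ring

lemma spanL_smul_mem {u w x : F × F} {a : F} (hx : x ∈ spanL D.v u w) (ha : D.vle 0 a) :
    a • x ∈ spanL D.v u w := by
  have := spanL_comb hx hx ha (vle_zero (D := D) 0)
  simpa using this

lemma spanL_subset {u w u' w' : F × F} (hu' : u' ∈ spanL D.v u w) (hw' : w' ∈ spanL D.v u w) :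
    spanL D.v u' w' ⊆ spanL D.v u w := by
  rintro x ⟨a, b, ha, hb, rfl⟩
  exact spanL_comb hu' hw' ((inO_iff _).1 ha) ((inO_iff _).1 hb)

lemma spanL_comm (u w : F × F) : spanL D.v u w = spanL D.v w u := by
  ext x
  constructor <;> rintro ⟨a, b, ha, hb, rfl⟩ <;> exact ⟨b, a, hb, ha, add_comm _ _⟩

/-- rebasing a span at a vector with unit first coefficient. -/
lemma spanL_rebase {u w c' : F × F} {a b : F} (ha : D.veq 0 a) (hb : D.vle 0 b)
    (hc : c' = a • u + b • w) : spanL D.v u w = spanL D.v c' w := by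
  have ha0 : a ≠ 0 := ha.ne
  apply Set.Subset.antisymm
  · apply spanL_subset
    · have : u = a⁻¹ • c' + (-(a⁻¹ * b)) • w := by
        rw [hc]
        refine Prod.ext ?_ ?_ <;>
        · simp only [Prod.fst_add, Prod.snd_add, Prod.smul_fst, Prod.smul_snd, smul_eq_mul]
          field_simp
          ring
      rw [this]
      exact spanL_comb (mem_spanL_left _ _) (mem_spanL_right _ _)
        (vle_of_veq ha.inv) ((vle_of_veq ha.inv).mul hb).neg
    · exact mem_spanL_right _ _
  · apply spanL_subset
    · rw [hc]
      exact spanL_comb (mem_spanL_left _ _) (mem_spanL_right _ _) (vle_of_veq ha) hb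
    · exact mem_spanL_right _ _

section coords
variable {c : F × F} (hQ : D.Qc c ≠ 0)

include hQ in
lemma tC_coords (x : F × F) {w : F × F} {a b : F} (hx : x = a • c + b • w) :
    D.tC c x = b * D.tC c w ∧ D.sC c x = a + b * D.sC c w := by
  rw [hx]
  constructor
  · rw [tC_comb, tC_c]; ring
  · rw [sC_comb, sC_c' hQ]; ring

include hQ in
lemma mem_spanL_coords {w : F × F} (htw : D.tC c w ≠ 0) (x : F × F) :
    x ∈ spanL D.v c w ↔ D.vle 0 (D.tC c x * (D.tC c w)⁻¹) ∧
      D.vle 0 (D.sC c x - D.tC c x * (D.tC c w)⁻¹ * D.sC c w) := by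
  constructor
  · rintro ⟨a, b, ha, hb, rfl⟩
    obtain ⟨ht, hs⟩ := tC_coords hQ _ (rfl : a • c + b • w = a • c + b • w)
    have hbt : D.tC c (a • c + b • w) * (D.tC c w)⁻¹ = b := by
      rw [ht, mul_assoc, mul_inv_cancel₀ htw, mul_one]
    rw [hbt, hs]
    exact ⟨(inO_iff _).1 hb, by
      have : a + b * D.sC c w - b * D.sC c w = a := by ring
      rw [this]; exact (inO_iff _).1 ha⟩
  · rintro ⟨h1, h2⟩
    refine ⟨_, _, (inO_iff _).2 h2, (inO_iff _).2 h1, ?_⟩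
    have hw := coord_id hQ w
    have hx := coord_id hQ x
    set s := D.sC c x
    set t := D.tC c x
    set sw := D.sC c w
    set tw := D.tC c w
    calc x = s • c + t • (D.evec c) := hx
    _ = (s - t * tw⁻¹ * sw) • c + (t * tw⁻¹) • w := by
        rw [hw]
        refine Prod.ext ?_ ?_ <;>
        · simp only [Prod.fst_add, Prod.snd_add, Prod.smul_fst, Prod.smul_snd, smul_eq_mul]
          field_simp
          ring

lemma dual_spanL (u w : F × F) : dualL D.σ D.v (spanL D.v u w)
    = {x | inO D.v (herm D.σ x u) ∧ inO D.v (herm D.σ x w)} := by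
  ext x
  constructor
  · intro hx
    exact ⟨hx u (mem_spanL_left _ _), hx w (mem_spanL_right _ _)⟩
  · rintro ⟨h1, h2⟩ y ⟨a, b, ha, hb, rfl⟩
    rw [herm_comb_right]
    have hA := ((inO_iff _).1 ha).sigma.mul ((inO_iff _).1 h1)
    have hB := ((inO_iff _).1 hb).sigma.mul ((inO_iff _).1 h2)
    exact (inO_iff _).2 ((hA.mono (by omega)).add (hB.mono (by omega)))

lemma mem_image_pi (Λ : Set (F × F)) (x : F × F) :
    x ∈ (fun z => D.π • z) '' Λ ↔ D.π⁻¹ • x ∈ Λ := by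
  constructor
  · rintro ⟨z, hz, rfl⟩
    simpa [smul_smul, inv_mul_cancel₀ D.hπ] using hz
  · intro h
    exact ⟨D.π⁻¹ • x, h, by simp [smul_smul, mul_inv_cancel₀ D.hπ]⟩

lemma linind_of_det {u w : F × F} (h : u.1 * w.2 - u.2 * w.1 ≠ 0) :
    LinearIndependent F ![u, w] := by
  rw [LinearIndependent.pair_iff]
  intro s t hst
  have h1 : s * u.1 + t * w.1 = 0 := by
    have := congrArg Prod.fst hst
    simpa using this
  have h2 : s * u.2 + t * w.2 = 0 := by
    have := congrArg Prod.snd hst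
    simpa using this
  constructor
  · have : s * (u.1 * w.2 - u.2 * w.1) = 0 := by linear_combination w.2 * h1 - w.1 * h2
    rcases mul_eq_zero.1 this with h' | h'
    · exact h'
    · exact absurd h' h
  · have : t * (u.1 * w.2 - u.2 * w.1) = 0 := by linear_combination u.1 * h2 - u.2 * h1
    rcases mul_eq_zero.1 this with h' | h'
    · exact h'
    · exact absurd h' h

include hQ in
lemma det_eq_tC (w : F × F) : c.1 * w.2 - c.2 * w.1 = -(D.tC c w) * D.Qc c := by
  have h1 : herm D.σ w (D.evec c) = c.1 * w.2 - c.2 * w.1 := by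
    simp only [herm, evec, map_neg, D.hinv]
    ring
  rw [← h1, herm_xe hQ]

end coords

end VData

namespace VData

variable {F : Type} [Field F] {D : VData F}

lemma sC_smul {c : F × F} (a : F) (x : F × F) : D.sC c (a • x) = a * D.sC c x := by
  have := sC_comb (D := D) (c := c) a 0 x x
  simpa using this

lemma tC_smul {c : F × F} (a : F) (x : F × F) : D.tC c (a • x) = a * D.tC c x := by
  have := tC_comb (D := D) (c := c) a 0 x x
  simpa using this

lemma sigma_pi_pow_odd (i : ℕ) : D.σ (D.π ^ (2*i+1)) = -(D.π ^ (2*i+1)) := by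
  rw [map_pow, D.hσπ]
  rw [neg_pow]
  have : (-1 : F) ^ (2*i+1) = -1 := Odd.neg_one_pow ⟨i, by ring⟩
  rw [this]
  ring

lemma herm_smul_right (a : F) (x y : F × F) :
    herm D.σ x (a • y) = D.σ a * herm D.σ x y := by
  simp only [herm, Prod.smul_fst, Prod.smul_snd, smul_eq_mul, map_mul]
  ring

lemma veq_sigma_rev {n : ℤ} {x : F} (h : D.veq n (D.σ x)) : D.veq n x := by
  have := h.sigma
  rwa [D.hinv] at this

lemma norm_one_unit {κ : F} (hκ : κ * D.σ κ = 1) : D.veq 0 κ := by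
  have hκ0 : κ ≠ 0 := by
    intro h; rw [h, zero_mul] at hκ; exact one_ne_zero hκ.symm
  refine ⟨hκ0, ?_⟩
  have := D.hvmul κ (D.σ κ) hκ0 (sigma_ne hκ0)
  rw [hκ, v_one, D.hvσ] at this
  omega

lemma sigma_inv_of_norm_one {κ : F} (hκ : κ * D.σ κ = 1) : D.σ κ = κ⁻¹ :=
  eq_inv_of_mul_eq_one_left (by rw [mul_comm] at hκ; exact hκ)

lemma vle_mul_unit_iff {u : F} (hu : D.veq 0 u) (n : ℤ) (x : F) :
    D.vle n (x * u) ↔ D.vle n x := by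
  have := vle_mul_veq_iff (D := D) (n := n) hu x
  simpa using this

section main
variable {c : F × F} {j : ℤ}

/-- the scalar `π^{-2j-1}`. -/
def lam0 (D : VData F) (j : ℤ) : F := D.π ^ (-(2*j+1))

lemma lam0_veq : D.veq (-(2*j+1)) (D.lam0 j) := veq_pi_zpow _

/-- the standard vector `W(κ) = λ₀ c + λ₀ κ e`. -/
def Wv (D : VData F) (c : F × F) (j : ℤ) (κ : F) : F × F :=
  D.lam0 j • c + (D.lam0 j * κ) • D.evec c

variable (hj0 : 0 ≤ j) (hvQ : D.veq (2*j) (D.Qc c))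

include hvQ in
lemma Wv_coords (κ : F) : D.sC c (D.Wv c j κ) = D.lam0 j ∧
    D.tC c (D.Wv c j κ) = D.lam0 j * κ := by
  have hQ := hvQ.ne
  unfold Wv
  rw [sC_comb, tC_comb, sC_c' hQ, tC_c, sC_e, tC_e hQ]
  constructor <;> ring

include hvQ in
lemma Wv_tC_ne {κ : F} (hκ : κ ≠ 0) : D.tC c (D.Wv c j κ) ≠ 0 := by
  rw [(Wv_coords hvQ κ).2]
  exact mul_ne_zero (lam0_veq).ne hκ

include hvQ in
lemma Wv_linind {κ : F} (hκ : κ ≠ 0) : LinearIndependent F ![c, D.Wv c j κ] := by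
  apply linind_of_det
  rw [det_eq_tC hvQ.ne]
  exact mul_ne_zero (neg_ne_zero.2 (Wv_tC_ne hvQ hκ)) hvQ.ne

include hvQ in
/-- membership criterion for the standard lattices. -/
lemma mem_Wv_span {κ : F} (hκ : D.veq 0 κ) (x : F × F) :
    x ∈ spanL D.v c (D.Wv c j κ) ↔
      D.vle (-(2*j+1)) (D.tC c x) ∧ D.vle 0 (D.sC c x - D.tC c x * κ⁻¹) := by
  obtain ⟨hs, ht⟩ := Wv_coords (D := D) hvQ κ
  rw [mem_spanL_coords hvQ.ne (by rw [ht]; exact mul_ne_zero lam0_veq.ne hκ.ne)]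
  rw [hs, ht]
  have hprod : D.veq (-(2*j+1)) (D.lam0 j * κ) := by
    have := (lam0_veq (D := D) (j := j)).mul hκ
    rwa [show (-(2*j+1) + 0 : ℤ) = -(2*j+1) by ring] at this
  have hinv : D.veq (2*j+1) (D.lam0 j * κ)⁻¹ := by
    have := hprod.inv
    rwa [show (-(-(2*j+1)) : ℤ) = 2*j+1 by ring] at this
  have h2 := vle_mul_veq_iff (D := D) (n := -(2*j+1)) hinv (D.tC c x)
  rw [show (-(2*j+1) + (2*j+1) : ℤ) = 0 by ring] at h2
  have h1 : ∀ z : F, z * (D.lam0 j * κ)⁻¹ * D.lam0 j = z * κ⁻¹ := by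
    intro z
    field_simp [lam0_veq.ne (D := D), hκ.ne]
  constructor
  · rintro ⟨c1, c2⟩
    exact ⟨h2.1 c1, by rwa [h1] at c2⟩
  · rintro ⟨c1, c2⟩
    exact ⟨h2.2 c1, by rwa [h1]⟩

include hj0 hvQ in
lemma Wv_vertex2 {κ : F} (hκn : κ * D.σ κ = 1) :
    IsVertex2 D.σ D.π D.v (spanL D.v c (D.Wv c j κ)) := by
  have hκ : D.veq 0 κ := norm_one_unit hκn
  have hσκ : D.σ κ = κ⁻¹ := sigma_inv_of_norm_one hκn
  have hσκ0 : D.veq 0 (D.σ κ) := hκ.sigma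
  obtain ⟨hs, ht⟩ := Wv_coords (D := D) hvQ κ
  refine ⟨⟨c, D.Wv c j κ, Wv_linind hvQ hκ.ne, rfl⟩, ?_⟩
  ext x
  rw [dual_spanL, mem_image_pi, Set.mem_setOf_eq, inO_iff, inO_iff,
    mem_Wv_span hvQ hκ]
  have hxc : herm D.σ x c = D.sC c x * D.Qc c := herm_xc hvQ.ne x
  have hxw : herm D.σ x (D.Wv c j κ)
      = (D.sC c x - D.tC c x * D.σ κ) * (D.σ (D.lam0 j) * D.Qc c) := by
    rw [herm_xw hvQ.ne, hs, ht, map_mul]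
    ring
  have hQiff := vle_mul_veq_iff (D := D) (n := -(2*j)) hvQ (D.sC c x)
  rw [show (-(2*j) + 2*j : ℤ) = 0 by ring] at hQiff
  have hM : D.veq (-1) (D.σ (D.lam0 j) * D.Qc c) := by
    have := (lam0_veq (D := D) (j := j)).sigma.mul hvQ
    rwa [show (-(2*j+1) + 2*j : ℤ) = -1 by ring] at this
  have hWiff := vle_mul_veq_iff (D := D) (n := 1) hM (D.sC c x - D.tC c x * D.σ κ)
  rw [show (1 + -1 : ℤ) = 0 by ring] at hWiff
  have htpi : D.tC c (D.π⁻¹ • x) = D.tC c x * D.π⁻¹ := by rw [tC_smul]; ring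
  have hspi : D.sC c (D.π⁻¹ • x) = D.sC c x * D.π⁻¹ := by rw [sC_smul]; ring
  have hπinv : D.veq (-1) (D.π)⁻¹ := by simpa using (veq_pi (D := D)).inv
  have ht1 := vle_mul_veq_iff (D := D) (n := -(2*j)) hπinv (D.tC c x)
  rw [show (-(2*j) + -1 : ℤ) = -(2*j+1) by ring] at ht1
  have hc2 : D.sC c (D.π⁻¹ • x) - D.tC c (D.π⁻¹ • x) * κ⁻¹
      = (D.sC c x - D.tC c x * D.σ κ) * D.π⁻¹ := by
    rw [htpi, hspi, hσκ]
    ring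
  have hE2 := vle_mul_veq_iff (D := D) (n := 1) hπinv (D.sC c x - D.tC c x * D.σ κ)
  rw [show (1 + -1 : ℤ) = 0 by ring] at hE2
  rw [hxc, hxw, hc2, htpi, hQiff, hWiff, ht1, hE2]
  have key : D.vle 1 (D.sC c x - D.tC c x * D.σ κ) →
      (D.vle (-(2*j)) (D.sC c x) ↔ D.vle (-(2*j)) (D.tC c x)) := by
    intro hE
    have hE' : D.vle (-(2*j)) (D.sC c x - D.tC c x * D.σ κ) := hE.mono (by omega)
    constructor
    · intro hsx
      have h3 : D.vle (-(2*j)) (D.tC c x * D.σ κ) := by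
        have : D.tC c x * D.σ κ = D.sC c x - (D.sC c x - D.tC c x * D.σ κ) := by ring
        rw [this]
        exact hsx.sub hE'
      exact (vle_mul_unit_iff hσκ0 _ _).1 h3
    · intro htx
      have : D.sC c x = (D.sC c x - D.tC c x * D.σ κ) + D.tC c x * D.σ κ := by ring
      rw [this]
      exact hE'.add ((vle_mul_unit_iff hσκ0 _ _).2 htx)
  constructor
  · rintro ⟨h1, h2⟩
    exact ⟨(key h2).1 h1, h2⟩
  · rintro ⟨h1, h2⟩
    exact ⟨(key h2).2 h1, h2⟩

include hvQ in
lemma Wv_pic_not_mem {κ : F} (hκ : D.veq 0 κ) :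
    D.π⁻¹ • c ∉ spanL D.v c (D.Wv c j κ) := by
  rw [mem_Wv_span hvQ hκ]
  rintro ⟨-, h2⟩
  have hs : D.sC c (D.π⁻¹ • c) = D.π⁻¹ := by
    rw [sC_smul, sC_c' hvQ.ne, mul_one]
  have htc : D.tC c (D.π⁻¹ • c) = 0 := by rw [tC_smul, tC_c, mul_zero]
  rw [hs, htc, zero_mul, sub_zero] at h2
  have hπinv : D.veq (-1) (D.π)⁻¹ := by simpa using (veq_pi (D := D)).inv
  exact hπinv.not_vle (by omega) h2

include hvQ in
lemma Wv_span_inj {κ κ' : F} (hκ : D.veq 0 κ)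
    (h : spanL D.v c (D.Wv c j κ) = spanL D.v c (D.Wv c j κ')) :
    D.vle (2*j+1) (κ - κ') := by
  have hmem : D.Wv c j κ' ∈ spanL D.v c (D.Wv c j κ) := by
    rw [h]; exact mem_spanL_right _ _
  rw [mem_Wv_span hvQ hκ] at hmem
  obtain ⟨hs, ht⟩ := Wv_coords (D := D) hvQ κ'
  obtain ⟨-, h2⟩ := hmem
  rw [hs, ht] at h2
  have key : D.lam0 j - D.lam0 j * κ' * κ⁻¹ = (κ - κ') * (D.lam0 j * κ⁻¹) := by
    field_simp [hκ.ne]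
  rw [key] at h2
  have hu : D.veq (-(2*j+1)) (D.lam0 j * κ⁻¹) := by
    have := (lam0_veq (D := D) (j := j)).mul hκ.inv
    rwa [show (-(2*j+1) + -0 : ℤ) = -(2*j+1) by ring] at this
  have := vle_mul_veq_iff (D := D) (n := 2*j+1) hu (κ - κ')
  rw [show (2*j+1 + -(2*j+1) : ℤ) = 0 by ring] at this
  exact this.1 h2

end main

end VData

namespace VData

variable {F : Type} [Field F] {D : VData F}

section main2
variable {c : F × F} {j : ℤ}

/-- C1 : a lattice containing `c` with `π⁻¹ c ∉ Λ` has a basis starting with `c`. -/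
lemma lattice_rebase {Λ : Set (F × F)} (hL : IsLattice D.v Λ) (hc : c ∈ Λ)
    (hpic : D.π⁻¹ • c ∉ Λ) : ∃ w, Λ = spanL D.v c w := by
  obtain ⟨u, u', hind, rfl⟩ := hL
  obtain ⟨a, b, ha, hb, hcab⟩ := hc
  have hnot : ¬ (D.vle 1 a ∧ D.vle 1 b) := by
    rintro ⟨ha1, hb1⟩
    apply hpic
    refine ⟨D.π⁻¹ * a, D.π⁻¹ * b, ?_, ?_, ?_⟩
    · refine (inO_iff _).2 ?_
      have := (vle_of_veq (veq_pi (D := D)).inv).mul ha1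
      exact this.mono (by omega)
    · refine (inO_iff _).2 ?_
      have := (vle_of_veq (veq_pi (D := D)).inv).mul hb1
      exact this.mono (by omega)
    · rw [hcab, smul_add, smul_smul, smul_smul]
  have hunit : D.veq 0 a ∨ D.veq 0 b := by
    rcases Classical.em (D.vle 1 a) with h | h
    · right
      have hbne : b ≠ 0 := fun h0 => hnot ⟨h, by simp [h0, vle_zero]⟩
      rcases (inO_iff b).1 hb with h0 | h0
      · exact absurd h0 hbne
      have : ¬ (1 : ℤ) ≤ D.v b := fun hh => hnot ⟨h, Or.inr hh⟩
      exact ⟨hbne, by omega⟩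
    · left
      have hane : a ≠ 0 := fun h0 => h (Or.inl h0)
      rcases (inO_iff a).1 ha with h0 | h0
      · exact absurd h0 hane
      have : ¬ (1 : ℤ) ≤ D.v a := fun hh => h (Or.inr hh)
      exact ⟨hane, by omega⟩
  rcases hunit with h | h
  · exact ⟨u', spanL_rebase h ((inO_iff b).1 hb) hcab⟩
  · refine ⟨u, ?_⟩
    rw [spanL_comm]
    exact spanL_rebase h ((inO_iff a).1 ha) (by rw [hcab, add_comm])

variable (hj0 : 0 ≤ j) (hvQ : D.veq (2*j) (D.Qc c))

include hj0 hvQ in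
/-- C2 : valuation conditions forced on a basis of a type-2 lattice. -/
lemma vertex2_conditions {w : F × F} (hV : IsVertex2 D.σ D.π D.v (spanL D.v c w))
    (hpic : D.π⁻¹ • c ∉ spanL D.v c w) :
    D.veq (-(2*j+1)) (D.sC c w) ∧ D.tC c w ≠ 0 ∧
      D.vle (2*j+2) (1 - (D.tC c w * (D.sC c w)⁻¹) * D.σ (D.tC c w * (D.sC c w)⁻¹)) := by
  have hQ : D.Qc c ≠ 0 := hvQ.ne
  have hdual := hV.2
  -- all pairings have valuation ≥ -1
  have pair_vle : ∀ x ∈ spanL D.v c w, ∀ y ∈ spanL D.v c w, D.vle (-1) (herm D.σ x y) := by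
    intro x hx y hy
    have hπx : D.π • x ∈ (fun z => D.π • z) '' spanL D.v c w := ⟨x, hx, rfl⟩
    rw [← hdual] at hπx
    have := hπx y hy
    rw [herm_smul_left, inO_iff, mul_comm] at this
    have h2 := vle_mul_veq_iff (D := D) (n := -1) (veq_pi (D := D)) (herm D.σ x y)
    rw [show (-1 + 1 : ℤ) = 0 by ring] at h2
    exact h2.1 this
  have hβ1 : D.vle (-1) (herm D.σ c w) :=
    pair_vle c (mem_spanL_left _ _) w (mem_spanL_right _ _)
  have hqw : D.vle 0 (herm D.σ w w) := by
    have h1 : D.vle (-1) (herm D.σ w w) :=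
      pair_vle w (mem_spanL_right _ _) w (mem_spanL_right _ _)
    have h2 : D.vle (2*0 - 1) (herm D.σ w w) := by
      rwa [show (2*(0:ℤ) - 1) = -1 by ring]
    have h3 := vle_even (D := D) (k := 0) (herm_sigma w w) h2
    simpa using h3
  have hQ0 : D.vle 0 (D.Qc c) := (vle_of_veq hvQ).mono (by omega)
  -- h(c,w) cannot be integral
  have hβnot : ¬ D.vle 0 (herm D.σ c w) := by
    intro hβ0
    apply hpic
    have hcd : c ∈ dualL D.σ D.v (spanL D.v c w) := by
      rw [dual_spanL]
      exact ⟨(inO_iff _).2 hQ0, (inO_iff _).2 hβ0⟩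
    rw [hdual, mem_image_pi] at hcd
    exact hcd
  have hβ : D.veq (-1) (herm D.σ c w) := by
    have hne : herm D.σ c w ≠ 0 := fun h0 => hβnot (Or.inl h0)
    rcases hβ1 with h | h
    · exact absurd h hne
    · refine ⟨hne, ?_⟩
      have : ¬ (0 : ℤ) ≤ D.v (herm D.σ c w) := fun hh => hβnot (Or.inr hh)
      omega
  -- herm c w = σ(sC w) Q
  have hform : herm D.σ c w = D.σ (D.sC c w) * D.Qc c := by
    rw [herm_xw hQ c w, sC_c' hQ, tC_c]
    ring
  have hsw : D.veq (-(2*j+1)) (D.sC c w) := by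
    apply veq_sigma_rev
    have h1 : D.σ (D.sC c w) = herm D.σ c w * (D.Qc c)⁻¹ := by
      rw [hform, mul_assoc, mul_inv_cancel₀ hQ, mul_one]
    rw [h1]
    have := hβ.mul hvQ.inv
    rwa [show (-1 + -(2*j) : ℤ) = -(2*j+1) by ring] at this
  have hsne : D.sC c w ≠ 0 := hsw.ne
  -- tC w ≠ 0
  have htw : D.tC c w ≠ 0 := by
    intro h0
    have : herm D.σ w w = D.sC c w * D.σ (D.sC c w) * D.Qc c := by
      rw [herm_ww hQ, h0]
      ring
    have hv : D.veq (-(2*j+2)) (herm D.σ w w) := by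
      rw [this]
      have := (hsw.mul hsw.sigma).mul hvQ
      rwa [show (-(2*j+1) + -(2*j+1) + 2*j : ℤ) = -(2*j+2) by ring] at this
    exact hv.not_vle (by omega) hqw
  refine ⟨hsw, htw, ?_⟩
  -- norm estimate
  set μ := D.tC c w * (D.sC c w)⁻¹ with hμ
  have hA : D.veq (-(2*j+2)) (D.sC c w * D.σ (D.sC c w) * D.Qc c) := by
    have := (hsw.mul hsw.sigma).mul hvQ
    rwa [show (-(2*j+1) + -(2*j+1) + 2*j : ℤ) = -(2*j+2) by ring] at this
  have hid : 1 - μ * D.σ μ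
      = herm D.σ w w * (D.sC c w * D.σ (D.sC c w) * D.Qc c)⁻¹ := by
    rw [herm_ww hQ, hμ, map_mul, map_inv₀]
    have hσs : D.σ (D.sC c w) ≠ 0 := sigma_ne hsne
    field_simp
  rw [hid]
  have := hqw.mul (vle_of_veq hA.inv)
  rwa [show (0 + -(-(2*j+2)) : ℤ) = 2*j+2 by ring] at this

/-- C3 : every unit with norm close to 1 is `±1` mod `π`. -/
lemma sign_split {μ : F} (hμ0 : μ ≠ 0) (hj0 : 0 ≤ j)
    (hN : D.vle (2*j+2) (1 - μ * D.σ μ)) :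
    D.veq 0 μ ∧ ∃ ε : F, (ε = 1 ∨ ε = -1) ∧ D.vle 1 (ε * μ - 1) := by
  have hN1 : D.vle 1 (1 - μ * D.σ μ) := hN.mono (by omega)
  have hNeq : D.veq 0 (μ * D.σ μ) := by
    have : μ * D.σ μ = 1 + (-(1 - μ * D.σ μ)) := by ring
    rw [this]
    exact (veq_one (D := D)).add_vlt hN1.neg (by omega)
  have hvμ : D.veq 0 μ := by
    refine ⟨hμ0, ?_⟩
    have := D.hvmul μ (D.σ μ) hμ0 (sigma_ne hμ0)
    rw [hNeq.2, D.hvσ] at this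
    omega
  refine ⟨hvμ, ?_⟩
  have hsq : D.vle 1 (μ * μ - 1) := by
    have h1 : μ * μ - 1 = (-(1 - μ * D.σ μ)) + μ * (-(D.σ μ - μ)) := by ring
    rw [h1]
    refine hN1.neg.add ?_
    have := (vle_of_veq hvμ).mul (vle_sigma_sub (vle_of_veq hvμ)).neg
    simpa using this
  by_cases h1 : μ - 1 = 0
  · exact ⟨1, Or.inl rfl, by rw [one_mul]; exact Or.inl h1⟩
  by_cases h2 : μ + 1 = 0
  · refine ⟨-1, Or.inr rfl, ?_⟩
    have : (-1) * μ - 1 = -(μ + 1) := by ring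
    rw [this, h2, neg_zero]
    exact vle_zero 1
  have hprod : (1:ℤ) ≤ D.v (μ - 1) + D.v (μ + 1) := by
    have hfact : (μ - 1) * (μ + 1) = μ * μ - 1 := by ring
    have hne : μ * μ - 1 ≠ 0 := by
      rw [← hfact]; exact mul_ne_zero h1 h2
    rcases hsq with h | h
    · exact absurd h hne
    · rw [← hfact, D.hvmul _ _ h1 h2] at h
      exact h
  have hm0 : (0:ℤ) ≤ D.v (μ - 1) := by
    rcases (vle_of_veq hvμ).sub (vle_of_veq (veq_one (D := D))) with h | h
    · exact absurd h h1
    · exact h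
  have hp0 : (0:ℤ) ≤ D.v (μ + 1) := by
    rcases (vle_of_veq hvμ).add (vle_of_veq (veq_one (D := D))) with h | h
    · exact absurd h h2
    · exact h
  rcases le_or_gt 1 (D.v (μ - 1)) with h | h
  · exact ⟨1, Or.inl rfl, by rw [one_mul]; exact Or.inr h⟩
  · refine ⟨-1, Or.inr rfl, ?_⟩
    have he : (-1) * μ - 1 = -(μ + 1) := by ring
    rw [he]
    refine vle.neg (Or.inr ?_)
    omega

end main2

end VData

namespace VData

variable {F : Type} [Field F] {D : VData F}

lemma one_add_small {z : F} (h : D.vle 1 z) : D.veq 0 (1 + z) :=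
  (veq_one (D := D)).add_vlt h (by omega)

lemma one_sub_small {z : F} (h : D.vle 1 z) : D.veq 0 (1 - z) := by
  rw [sub_eq_add_neg]
  exact one_add_small h.neg

/-- C4 : successive approximation of `ν` by norm-one elements `Mu y`. -/
lemma approx_chain {ν : F} (hν1 : D.vle 1 (ν - 1)) (n : ℕ)
    (hνN : D.vle (2*(n:ℤ)+2) (1 - ν * D.σ ν)) :
    ∃ y, D.σ y = y ∧ D.vle 0 y ∧ D.vle (2*(n:ℤ)+1) (ν * (D.Mu y)⁻¹ - 1) := by
  suffices h : ∀ i : ℕ, i ≤ n → ∃ y, D.σ y = y ∧ D.vle 0 y ∧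
      D.vle (2*(i:ℤ)+1) (ν * (D.Mu y)⁻¹ - 1) from h n le_rfl
  intro i
  induction i with
  | zero =>
    intro _
    refine ⟨0, map_zero _, vle_zero 0, ?_⟩
    rw [Mu_zero, inv_one, mul_one]
    simpa using hν1
  | succ i ih =>
    intro hin
    obtain ⟨y, hyfix, hy0, hy⟩ := ih (by omega)
    have h2 : (2:F) ≠ 0 := D.h2
    have hπ : D.π ≠ 0 := D.hπ
    have hMuy : D.veq 0 (D.Mu y) := Mu_veq hy0
    set ν' := ν * (D.Mu y)⁻¹ with hν'def
    clear_value ν'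
    have hnorm : ν' * D.σ ν' = ν * D.σ ν := by
      have h1 : D.Mu y * D.σ (D.Mu y) = 1 := Mu_norm hyfix hy0
      have he : ν' * D.σ ν' = (ν * D.σ ν) * (D.Mu y * D.σ (D.Mu y))⁻¹ := by
        rw [hν'def, map_mul, map_inv₀, mul_inv]
        ring
      rw [he, h1, inv_one, mul_one]
    have hνN' : D.vle (2*(n:ℤ)+2) (1 - ν' * D.σ ν') := by rw [hnorm]; exact hνN
    set P := D.π ^ (2*i+1) with hPdef
    clear_value P
    have hP : D.veq (2*(i:ℤ)+1) P := by
      have h0 := veq_pi_pow (D := D) (2*i+1)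
      rw [show ((2*i+1 : ℕ) : ℤ) = 2*(i:ℤ)+1 by push_cast; ring] at h0
      rwa [← hPdef] at h0
    have hσP : D.σ P = -P := by rw [hPdef]; exact sigma_pi_pow_odd i
    set w' := (ν' - 1) * P⁻¹ with hw'def
    clear_value w'
    have hw0 : D.vle 0 w' := by
      have h0 := hy.mul (vle_of_veq hP.inv)
      rw [show (2*(i:ℤ)+1 + -(2*(i:ℤ)+1) : ℤ) = 0 by ring] at h0
      rwa [← hw'def] at h0
    have hPne : P ≠ 0 := hP.ne
    have hν'w : ν' = 1 + P * w' := by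
      rw [hw'def]
      field_simp
      ring
    have hw'fix_data : D.σ w' = D.σ w' := rfl
    set f := (w' + D.σ w') * 2⁻¹ with hfdef
    clear_value f
    set g := (w' - D.σ w') * (2 * D.π)⁻¹ with hgdef
    clear_value g
    have hffix : D.σ f = f := by
      rw [hfdef, map_mul, map_add, D.hinv, map_inv₀, sigma_two]
      ring
    have hgfix : D.σ g = g := by
      rw [hgdef, map_mul, map_sub, D.hinv, map_inv₀, map_mul, sigma_two, D.hσπ]
      field_simp
      ring
    have hf0 : D.vle 0 f := by
      have := (hw0.add hw0.sigma).mul (vle_of_veq (veq_two (D := D)).inv)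
      simpa [hfdef] using this
    have hg0 : D.vle 0 g := by
      have h1 : D.vle 1 (w' - D.σ w') := by
        have := (vle_sigma_sub hw0).neg
        simpa using this
      have h2π : D.veq (-1) (2 * D.π)⁻¹ := by
        have := ((veq_two (D := D)).mul (veq_pi (D := D))).inv
        simpa using this
      have := h1.mul (vle_of_veq h2π)
      rw [show (1 + -1 : ℤ) = 0 by ring] at this
      rwa [hgdef]
    have hw'fg : w' = f + D.π * g := by
      rw [hfdef, hgdef]
      field_simp
      ring
    have hσw' : D.σ w' = f - D.π * g := by
      rw [hfdef, hgdef]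
      field_simp
      ring
    have hσν' : D.σ ν' = 1 - P * (f - D.π * g) := by
      rw [hν'w, map_add, map_one, map_mul, hσP, hσw']
      ring
    set G := g - P * (f * f) * (2 * D.π)⁻¹ with hGdef
    clear_value G
    have hNid : (1 - ν' * D.σ ν') + (P*P*D.π*D.π)*(g*g) = -(2*(P*D.π)) * G + 0 := by
      rw [hσν', hGdef]
      nth_rewrite 1 [hν'w]
      rw [hw'fg]
      field_simp
      ring
    have hbound : D.vle (2*(i:ℤ)+4) (1 - ν' * D.σ ν') := hνN'.mono (by omega)
    have hg2 : D.vle (2*(i:ℤ)+4) ((P*P*D.π*D.π)*(g*g)) := by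
      have hq : D.veq (4*(i:ℤ)+4) (P*P*D.π*D.π) := by
        have := ((hP.mul hP).mul (veq_pi (D := D))).mul (veq_pi (D := D))
        rwa [show (2*(i:ℤ)+1 + (2*(i:ℤ)+1) + 1 + 1 : ℤ) = 4*(i:ℤ)+4 by ring] at this
      have := (vle_of_veq hq).mul (hg0.mul hg0)
      exact (by simpa using this : D.vle (4*(i:ℤ)+4) _).mono (by omega)
    have h5 : D.vle (2*(i:ℤ)+4) (-(2*(P*D.π)) * G) := by
      have h6 := hbound.add hg2
      rw [hNid, add_zero] at h6
      exact h6
    have h2Pπ : D.veq (2*(i:ℤ)+2) (-(2*(P*D.π))) := by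
      have := ((veq_two (D := D)).mul hP).mul (veq_pi (D := D))
      have h' := this.neg
      rw [show (0 + (2*(i:ℤ)+1) + 1 : ℤ) = 2*(i:ℤ)+2 by ring] at h'
      rwa [show -(2 * P * D.π) = -(2*(P*D.π)) by ring] at h'
    have hG2 : D.vle 2 G := by
      have hiff := vle_mul_veq_iff (D := D) (n := 2) h2Pπ G
      rw [show (2 + (2*(i:ℤ)+2) : ℤ) = 2*(i:ℤ)+4 by ring] at hiff
      exact hiff.1 (by rwa [mul_comm (-(2*(P*D.π))) G] at h5)
    set s := f * 2⁻¹ with hsdef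
    clear_value s
    have hsfix : D.σ s = s := by
      rw [hsdef, map_mul, hffix, map_inv₀, sigma_two]
    have hs0 : D.vle 0 s := by
      have := hf0.mul (vle_of_veq (veq_two (D := D)).inv)
      simpa [hsdef] using this
    set ys := P * D.π⁻¹ * s with hysdef
    clear_value ys
    have hysfix : D.σ ys = ys := by
      rw [hysdef, map_mul, map_mul, hσP, map_inv₀, D.hσπ, hsfix]
      field_simp
    have hys0 : D.vle 0 ys := by
      have := (vle_of_veq (hP.mul (veq_pi (D := D)).inv)).mul hs0
      rw [show (2*(i:ℤ)+1 + -1 + 0 : ℤ) = 2*(i:ℤ) by ring] at this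
      exact (by rwa [hysdef] : D.vle (2*(i:ℤ)) ys).mono (by omega)
    have hpiys : D.π * ys = P * s := by
      rw [hysdef]
      field_simp
    have hMuys : D.Mu ys = (1 + P*s) * (1 - P*s)⁻¹ := by
      unfold Mu
      rw [hpiys]
    have hPs1 : D.vle 1 (P*s) := by
      have := (vle_of_veq hP).mul hs0
      exact (by simpa using this : D.vle (2*(i:ℤ)+1) _).mono (by omega)
    have h1p : D.veq 0 (1 + P*s) := one_add_small hPs1
    have h1m : D.veq 0 (1 - P*s) := one_sub_small hPs1
    have hX : ν' * (1 - P*s) - (1 + P*s) = (G - P*s*g) * (P*D.π) := by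
      nth_rewrite 1 [hν'w]
      rw [hGdef, hsdef, hw'fg]
      field_simp
      ring
    have hXvle : D.vle (2*(i:ℤ)+3) (ν' * (1 - P*s) - (1 + P*s)) := by
      rw [hX]
      have hbr : D.vle 1 (G - P*s*g) := by
        refine (hG2.mono (by omega)).sub ?_
        have := (vle_of_veq hP).mul (hs0.mul hg0)
        have h' : D.vle (2*(i:ℤ)+1) (P*(s*g)) := by simpa using this
        exact (by rwa [mul_assoc] : D.vle (2*(i:ℤ)+1) (P*s*g)).mono (by omega)
      have hPπ : D.veq (2*(i:ℤ)+2) (P*D.π) := by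
        have := hP.mul (veq_pi (D := D))
        rwa [show (2*(i:ℤ)+1+1 : ℤ) = 2*(i:ℤ)+2 by ring] at this
      have := hbr.mul (vle_of_veq hPπ)
      rwa [show (1 + (2*(i:ℤ)+2) : ℤ) = 2*(i:ℤ)+3 by ring] at this
    have h1pne : (1 + P*s) ≠ 0 := h1p.ne
    have h1mne : (1 - P*s) ≠ 0 := h1m.ne
    have hν''eq : ν' * (D.Mu ys)⁻¹ - 1
        = (ν' * (1 - P*s) - (1 + P*s)) * (1 + P*s)⁻¹ := by
      rw [hMuys, mul_inv, inv_inv]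
      field_simp
      try ring
    have hν''vle : D.vle (2*(i:ℤ)+3) (ν' * (D.Mu ys)⁻¹ - 1) := by
      rw [hν''eq]
      have := hXvle.mul (vle_of_veq h1p.inv)
      rwa [show (2*(i:ℤ)+3 + -0 : ℤ) = 2*(i:ℤ)+3 by ring] at this
    obtain ⟨hmul, hden⟩ := Mu_mul_eq (D := D) hy0 hys0
    set Y := (y + ys) * (1 + D.π^2 * y * ys)⁻¹ with hYdef
    clear_value Y
    have hσπ2 : D.σ (D.π^2) = D.π^2 := by
      rw [map_pow, D.hσπ]
      ring
    have hYfix : D.σ Y = Y := by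
      rw [hYdef, map_mul, map_add, hyfix, hysfix, map_inv₀, map_add, map_one,
        map_mul, map_mul, hσπ2, hyfix, hysfix]
    have hY0 : D.vle 0 Y := by
      have := (hy0.add hys0).mul (vle_of_veq hden.inv)
      rw [show (0 + -0 : ℤ) = 0 by ring] at this
      rwa [hYdef]
    refine ⟨Y, hYfix, hY0, ?_⟩
    have hfinal : ν * (D.Mu Y)⁻¹ = ν' * (D.Mu ys)⁻¹ := by
      rw [← hmul, mul_inv, hν'def]
      ring
    rw [show (2*((i+1 : ℕ) : ℤ)+1 : ℤ) = 2*(i:ℤ)+3 by push_cast; ring, hfinal]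
    exact hν''vle

end VData

namespace VData

variable {F : Type} [Field F] {D : VData F}

lemma Mu_sub_one {y : F} (hy : D.vle 0 y) : D.vle 1 (D.Mu y - 1) := by
  have := (Mu_ratio_vle_iff (D := D) (n := 0) hy (vle_zero 0)).2 (by simpa using hy)
  simpa [Mu_zero] using this

lemma eps_veq {ε : F} (hε : ε = 1 ∨ ε = -1) : D.veq 0 ε := by
  rcases hε with rfl | rfl
  · exact veq_one
  · exact (veq_one (D := D)).neg

section main3
variable {c : F × F} {j : ℤ} (hj0 : 0 ≤ j) (hvQ : D.veq (2*j) (D.Qc c))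

include hj0 hvQ in
/-- Surjectivity : every type-2 lattice `Λ ∋ c`, `π⁻¹c ∉ Λ`, is a standard one. -/
lemma surj_classify (R : Finset F) (hRO : ∀ r ∈ R, inO D.v r)
    (hRrep : ∀ x : F, inO D.v x → ∃! r, r ∈ R ∧ inO D.v ((x - r) / D.π))
    {Λ : Set (F × F)} (hV : IsVertex2 D.σ D.π D.v Λ) (hc : c ∈ Λ)
    (hpic : D.π⁻¹ • c ∉ Λ) {n : ℕ} (hn : (n:ℤ) = j) :
    ∃ (ε : F) (f : ℕ → F), (ε = 1 ∨ ε = -1) ∧ (∀ k < n, f k ∈ R) ∧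
      Λ = spanL D.v c (D.Wv c j (ε * D.Mu (D.dsum (fun k => D.fixel (f k)) n))) := by
  obtain ⟨w, rfl⟩ := lattice_rebase hV.1 hc hpic
  obtain ⟨hsw, htw, hnormb⟩ := vertex2_conditions hj0 hvQ hV hpic
  set μ := D.tC c w * (D.sC c w)⁻¹ with hμdef
  have hμ0 : μ ≠ 0 := mul_ne_zero htw (inv_ne_zero hsw.ne)
  obtain ⟨hvμ, ε, hε, hεμ⟩ := sign_split (D := D) (j := j) hμ0 hj0 hnormb
  have hσε : D.σ ε = ε := by
    rcases hε with rfl | rfl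
    · exact map_one _
    · exact sigma_neg_one
  have hε2 : ε * ε = 1 := by rcases hε with rfl | rfl <;> ring
  set ν := ε * μ with hνdef
  have hν1 : D.vle 1 (ν - 1) := hεμ
  have hνN : D.vle (2*(n:ℤ)+2) (1 - ν * D.σ ν) := by
    have hid : 1 - ν * D.σ ν = 1 - μ * D.σ μ := by
      rw [hνdef, map_mul, hσε]
      linear_combination (-(μ * D.σ μ)) * hε2
    rw [hid, show (2*(n:ℤ)+2) = 2*j+2 by omega]
    exact hnormb
  obtain ⟨y, hyfix, hy0, hyapp⟩ := approx_chain hν1 n hνN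
  obtain ⟨f, hfR, hfy⟩ := digits_exist R hRO hRrep hyfix hy0 n
  set dy := D.dsum (fun k => D.fixel (f k)) n with hdydef
  have hdyfix : D.σ dy = dy := dsum_fixed n (fun k _ => fixel_fixed (f k))
  have hdy0 : D.vle 0 dy := dsum_vle n (fun k hk => fixel_vle ((inO_iff _).1 (hRO _ (hfR k hk))))
  have hMud : D.veq 0 (D.Mu dy) := Mu_veq hdy0
  have hMudne : D.Mu dy ≠ 0 := hMud.ne
  have hMuy : D.veq 0 (D.Mu y) := Mu_veq hy0
  have hMuyne : D.Mu y ≠ 0 := hMuy.ne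
  have hMuratio : D.vle (2*(n:ℤ)+1) (D.Mu y * (D.Mu dy)⁻¹ - 1) := by
    have := (Mu_ratio_vle_iff (D := D) (n := 2*(n:ℤ)) hy0 hdy0).2 hfy
    exact this
  set δ := ν * (D.Mu dy)⁻¹ with hδdef
  have hδ1 : D.vle (2*(n:ℤ)+1) (δ - 1) := by
    have hAB : δ = (ν * (D.Mu y)⁻¹) * (D.Mu y * (D.Mu dy)⁻¹) := by
      rw [hδdef]
      field_simp
    have hkey : δ - 1 = (ν * (D.Mu y)⁻¹ - 1) * (D.Mu y * (D.Mu dy)⁻¹)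
        + (D.Mu y * (D.Mu dy)⁻¹ - 1) := by
      rw [hAB]; ring
    rw [hkey]
    refine vle.add ?_ hMuratio
    have hB0 : D.vle 0 (D.Mu y * (D.Mu dy)⁻¹) := by
      have he : D.Mu y * (D.Mu dy)⁻¹ = 1 + (D.Mu y * (D.Mu dy)⁻¹ - 1) := by ring
      rw [he]
      exact (vle_of_veq (veq_one (D := D))).add (hMuratio.mono (by omega))
    have := hyapp.mul hB0
    rwa [show (2*(n:ℤ)+1 + 0 : ℤ) = 2*(n:ℤ)+1 by ring] at this
  set κ := ε * D.Mu dy with hκdef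
  have hκn : κ * D.σ κ = 1 := by
    rw [hκdef, map_mul, hσε]
    have hMN := Mu_norm hdyfix hdy0
    rw [show ε * D.Mu dy * (ε * D.σ (D.Mu dy)) = (ε*ε) * (D.Mu dy * D.σ (D.Mu dy)) by ring,
      hε2, one_mul, hMN]
  have hκ0 : D.veq 0 κ := norm_one_unit hκn
  have hκne : κ ≠ 0 := hκ0.ne
  have hδ0 : D.veq 0 δ := by
    have hd1 : D.vle 1 (δ - 1) := hδ1.mono (by omega)
    have he : δ = 1 + (δ - 1) := by ring
    rw [he]
    exact (veq_one (D := D)).add_vlt hd1 (by omega)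
  have hδne : δ ≠ 0 := hδ0.ne
  have hμκ : μ = κ * δ := by
    rw [hκdef, hδdef, hνdef,
      show ε * D.Mu dy * (ε * μ * (D.Mu dy)⁻¹) = (ε*ε) * μ * (D.Mu dy * (D.Mu dy)⁻¹) by ring,
      hε2, mul_inv_cancel₀ hMudne]
    ring
  refine ⟨ε, f, hε, hfR, ?_⟩
  have htwv : D.veq (-(2*j+1)) (D.tC c w) := by
    have h1 : D.tC c w = D.sC c w * μ := by
      rw [hμdef, ← mul_assoc, mul_comm (D.sC c w) (D.tC c w), mul_assoc,
        mul_inv_cancel₀ hsw.ne, mul_one]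
    rw [h1]
    have := hsw.mul hvμ
    rwa [show (-(2*j+1) + 0 : ℤ) = -(2*j+1) by ring] at this
  ext x
  rw [mem_spanL_coords hvQ.ne htw, mem_Wv_span hvQ hκ0]
  have hL1 : D.vle 0 (D.tC c x * (D.tC c w)⁻¹) ↔ D.vle (-(2*j+1)) (D.tC c x) := by
    have hiff := vle_mul_veq_iff (D := D) (n := -(2*j+1)) htwv.inv (D.tC c x)
    rw [show (-(2*j+1) + -(-(2*j+1)) : ℤ) = 0 by ring] at hiff
    exact hiff
  have hmid : D.vle (-(2*j+1)) (D.tC c x) →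
      D.vle 0 (D.tC c x * ((D.tC c w)⁻¹ * D.sC c w - κ⁻¹)) := by
    intro hR1
    have h1 : (D.tC c w)⁻¹ * D.sC c w = μ⁻¹ := by
      rw [hμdef, mul_inv, inv_inv]
      try ring
    have hident : (D.tC c w)⁻¹ * D.sC c w - κ⁻¹ = (1 - δ) * (κ * δ)⁻¹ := by
      rw [h1, hμκ]
      field_simp
      try ring
    have h2 : D.vle (2*(n:ℤ)+1) (1 - δ) := by
      have he : (1 - δ) = -(δ - 1) := by ring
      rw [he]
      exact hδ1.neg
    have h3 := h2.mul (vle_of_veq (hκ0.mul hδ0).inv)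
    rw [show (2*(n:ℤ)+1 + -(0+0) : ℤ) = 2*j+1 by omega] at h3
    rw [hident]
    have h4 := hR1.mul h3
    rwa [show (-(2*j+1) + (2*j+1) : ℤ) = 0 by ring] at h4
  constructor
  · rintro ⟨h1, h2⟩
    have hR1 := hL1.1 h1
    refine ⟨hR1, ?_⟩
    have hkey : D.sC c x - D.tC c x * κ⁻¹
        = (D.sC c x - D.tC c x * (D.tC c w)⁻¹ * D.sC c w)
          + D.tC c x * ((D.tC c w)⁻¹ * D.sC c w - κ⁻¹) := by ring
    rw [hkey]
    exact h2.add (hmid hR1)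
  · rintro ⟨hR1, h2⟩
    refine ⟨hL1.2 hR1, ?_⟩
    have hkey : D.sC c x - D.tC c x * (D.tC c w)⁻¹ * D.sC c w
        = (D.sC c x - D.tC c x * κ⁻¹) - D.tC c x * ((D.tC c w)⁻¹ * D.sC c w - κ⁻¹) := by ring
    rw [hkey]
    exact h2.sub (hmid hR1)

include hj0 hvQ in
/-- Injectivity of the parametrisation. -/
lemma inj_classify (R : Finset F) (hRO : ∀ r ∈ R, inO D.v r)
    (hRrep : ∀ x : F, inO D.v x → ∃! r, r ∈ R ∧ inO D.v ((x - r) / D.π))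
    {ε ε' : F} {f f' : ℕ → F} {n : ℕ} (hε : ε = 1 ∨ ε = -1) (hε' : ε' = 1 ∨ ε' = -1)
    (hfR : ∀ k < n, f k ∈ R) (hf'R : ∀ k < n, f' k ∈ R) (hn : (n:ℤ) = j)
    (h : spanL D.v c (D.Wv c j (ε * D.Mu (D.dsum (fun k => D.fixel (f k)) n)))
       = spanL D.v c (D.Wv c j (ε' * D.Mu (D.dsum (fun k => D.fixel (f' k)) n)))) :
    ε = ε' ∧ ∀ k < n, f k = f' k := by
  set dy := D.dsum (fun k => D.fixel (f k)) n with hdydef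
  set dy' := D.dsum (fun k => D.fixel (f' k)) n with hdy'def
  have hdy0 : D.vle 0 dy := dsum_vle n (fun k hk => fixel_vle ((inO_iff _).1 (hRO _ (hfR k hk))))
  have hdy'0 : D.vle 0 dy' :=
    dsum_vle n (fun k hk => fixel_vle ((inO_iff _).1 (hRO _ (hf'R k hk))))
  have hMud : D.veq 0 (D.Mu dy) := Mu_veq hdy0
  have hMud' : D.veq 0 (D.Mu dy') := Mu_veq hdy'0
  have hκ0 : D.veq 0 (ε * D.Mu dy) := by
    have := (eps_veq (D := D) hε).mul hMud
    simpa using this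
  have hsub : D.vle (2*j+1) (ε * D.Mu dy - ε' * D.Mu dy') := Wv_span_inj hvQ hκ0 h
  have hεε : ε = ε' := by
    by_contra hne
    have hbig : D.veq 0 (ε * D.Mu dy - ε' * D.Mu dy') := by
      have hplus : D.veq 0 (D.Mu dy + D.Mu dy') := by
        have he : D.Mu dy + D.Mu dy' = 2 + ((D.Mu dy - 1) + (D.Mu dy' - 1)) := by ring
        rw [he]
        exact (veq_two (D := D)).add_vlt ((Mu_sub_one hdy0).add (Mu_sub_one hdy'0)) (by omega)
      rcases hε with rfl | rfl <;> rcases hε' with rfl | rfl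
      · exact absurd rfl hne
      · have he : (1:F) * D.Mu dy - (-1) * D.Mu dy' = D.Mu dy + D.Mu dy' := by ring
        rw [he]; exact hplus
      · have he : (-1:F) * D.Mu dy - 1 * D.Mu dy' = -(D.Mu dy + D.Mu dy') := by ring
        rw [he]; exact hplus.neg
      · exact absurd rfl hne
    exact hbig.not_vle (by omega) hsub
  refine ⟨hεε, ?_⟩
  subst hεε
  have hsub2 : D.vle (2*j+1) (D.Mu dy - D.Mu dy') := by
    have he : ε * D.Mu dy - ε * D.Mu dy' = (D.Mu dy - D.Mu dy') * ε := by ring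
    rw [he] at hsub
    exact (vle_mul_unit_iff (eps_veq (D := D) hε) _ _).1 hsub
  have hratio : D.vle (2*j+1) ((D.Mu dy * (D.Mu dy')⁻¹ - 1) * D.Mu dy') := by
    have he : (D.Mu dy * (D.Mu dy')⁻¹ - 1) * D.Mu dy' = D.Mu dy - D.Mu dy' := by
      field_simp [hMud'.ne]
    rw [he]
    exact hsub2
  have hratio2 : D.vle (2*j+1) (D.Mu dy * (D.Mu dy')⁻¹ - 1) :=
    (vle_mul_unit_iff hMud' _ _).1 hratio
  have hdiff : D.vle (2*(n:ℤ)) (dy - dy') := by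
    refine (Mu_ratio_vle_iff (D := D) (n := 2*(n:ℤ)) hdy0 hdy'0).1 ?_
    rwa [show (2*(n:ℤ)+1 : ℤ) = 2*j+1 by omega]
  exact digits_unique R hRO hRrep hfR hf'R hdiff

end main3

/-- Translation of `nIs` into two membership conditions. -/
lemma nIs_iff_span {Λ : Set (F × F)} (hL : IsLattice D.v Λ) (b : F × F) (N : ℤ) :
    nIs D.π b Λ N ↔ (D.π ^ (-N) • b ∈ Λ ∧ D.π ^ (-(N+1)) • b ∉ Λ) := by
  obtain ⟨u, w, -, rfl⟩ := hL
  constructor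
  · rintro ⟨hmem, hub⟩
    refine ⟨hmem, fun hcon => ?_⟩
    have : N + 1 ≤ N := hub hcon
    omega
  · rintro ⟨hmem, hnot⟩
    refine ⟨hmem, fun m hm => ?_⟩
    by_contra hcon
    push_neg at hcon
    apply hnot
    have hkey : D.π ^ (-(N+1)) • b = D.π ^ (m - N - 1) • (D.π ^ (-m) • b) := by
      rw [smul_smul, ← zpow_add₀ D.hπ]
      congr 1
      ring
    rw [hkey]
    exact spanL_smul_mem hm ((vle_of_veq (veq_pi_zpow (m - N - 1))).mono (by omega))

end VData

namespace VData

variable {F : Type} [Field F] {D : VData F}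

lemma norm_one_eps {ε z : F} (hε : ε = 1 ∨ ε = -1) (hz : z * D.σ z = 1) :
    (ε * z) * D.σ (ε * z) = 1 := by
  have hσε : D.σ ε = ε := by
    rcases hε with rfl | rfl
    · exact map_one _
    · exact sigma_neg_one
  have hε2 : ε * ε = 1 := by rcases hε with rfl | rfl <;> ring
  rw [map_mul, hσε, show ε * z * (ε * D.σ z) = (ε*ε) * (z * D.σ z) by ring, hε2, one_mul, hz]

lemma neg_one_ne_one (h2 : (2:F) ≠ 0) : (-1 : F) ≠ 1 := by
  intro h
  apply h2
  linear_combination -h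

end VData

open VData in
theorem statement15
    (σ : F →+* F) (π : F) (v : F → ℤ)
    (hinv : ∀ x, σ (σ x) = x)
    (hσπ : σ π = -π)
    (hπ : π ≠ 0)
    (h2 : (2 : F) ≠ 0)
    (hvπ : v π = 1)
    (hv2 : v (2 : F) = 0)
    (hvσ : ∀ x, v (σ x) = v x)
    (hvmul : ∀ x y : F, x ≠ 0 → y ≠ 0 → v (x * y) = v x + v y)
    (hvadd : ∀ x y : F, x ≠ 0 → y ≠ 0 → x + y ≠ 0 → min (v x) (v y) ≤ v (x + y))
    (heven : ∀ x : F, σ x = x → x ≠ 0 → Even (v x))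
    (q : ℕ) (R : Finset F) (hRO : ∀ r ∈ R, inO v r) (hRcard : R.card = q)
    (hRrep : ∀ x : F, inO v x → ∃! r, r ∈ R ∧ inO v ((x - r) / π))
    (b : F × F) (hb : herm σ b b ≠ 0) (hbO : inO v (herm σ b b))
    (α : ℤ) (hα : v (herm σ b b) = 2 * α)
    (j : ℤ) (hj0 : 0 ≤ j) (hjα : j ≤ α) :
    {Λ : Set (F × F) | IsVertex2 σ π v Λ ∧ nIs π b Λ (α - j)}.Finite ∧
    Nat.card {Λ : Set (F × F) | IsVertex2 σ π v Λ ∧ nIs π b Λ (α - j)} =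
      2 * q ^ j.toNat := by
  classical
  set D : VData F := ⟨σ, π, v, hinv, hσπ, hπ, h2, hvπ, hv2, hvσ, hvmul, hvadd, heven⟩ with hD
  set n := j.toNat with hndef
  have hn : (n : ℤ) = j := Int.toNat_of_nonneg hj0
  set c := D.π ^ (j - α) • b with hcdef
  have hQb : D.veq (2*α) (herm D.σ b b) := ⟨hb, hα⟩
  have hQc : D.veq (2*j) (D.Qc c) := by
    have hkk : D.Qc c = (D.π ^ (j-α) * D.σ (D.π ^ (j-α))) * herm D.σ b b := by
      rw [hcdef]
      unfold Qc
      rw [herm_smul_left, herm_smul_right]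
      ring
    rw [hkk]
    have := ((veq_pi_zpow (D := D) (j-α)).mul (veq_pi_zpow (D := D) (j-α)).sigma).mul hQb
    rwa [show (j-α + (j-α) + 2*α : ℤ) = 2*j by ring] at this
  have hc1 : ∀ Λ : Set (F × F), IsLattice D.v Λ →
      (nIs D.π b Λ (α - j) ↔ (c ∈ Λ ∧ D.π⁻¹ • c ∉ Λ)) := by
    intro Λ hL
    rw [nIs_iff_span hL b (α - j)]
    have e1 : D.π ^ (-(α - j)) • b = c := by
      rw [hcdef, show (-(α - j) : ℤ) = j - α by ring]
    have e2 : D.π ^ (-((α - j) + 1)) • b = D.π⁻¹ • c := by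
      rw [hcdef, smul_smul, ← zpow_neg_one, ← zpow_add₀ D.hπ,
        show (-1 + (j - α) : ℤ) = -((α - j) + 1) by ring]
    rw [e1, e2]
  -- the parametrisation
  let ext : (Fin n → {r // r ∈ R}) → ℕ → F :=
    fun g k => if h : k < n then (g ⟨k, h⟩ : F) else 0
  have hextR : ∀ g, ∀ k, k < n → ext g k ∈ R := by
    intro g k hk
    simp only [ext, dif_pos hk]
    exact (g ⟨k, hk⟩).2
  let κf : Bool × (Fin n → {r // r ∈ R}) → F :=
    fun p => (if p.1 then (1:F) else -1) * D.Mu (D.dsum (fun k => D.fixel (ext p.2 k)) n)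
  let Φ : Bool × (Fin n → {r // r ∈ R}) → Set (F × F) :=
    fun p => spanL D.v c (D.Wv c j (κf p))
  have hεp : ∀ t : Bool, ((if t then (1:F) else -1) = 1 ∨ (if t then (1:F) else -1) = -1) := by
    intro t
    cases t
    · right; simp
    · left; simp
  have hκnorm : ∀ p, κf p * D.σ (κf p) = 1 := by
    intro p
    refine norm_one_eps (hεp p.1) (Mu_norm ?_ ?_)
    · exact dsum_fixed n (fun k _ => fixel_fixed _)
    · exact dsum_vle n (fun k hk => fixel_vle ((inO_iff _).1 (hRO _ (hextR p.2 k hk))))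
  have hrange : {Λ : Set (F × F) | IsVertex2 σ π v Λ ∧ nIs π b Λ (α - j)} = Set.range Φ := by
    ext Λ
    simp only [Set.mem_setOf_eq, Set.mem_range]
    constructor
    · rintro ⟨hV, hnis⟩
      have hV' : IsVertex2 D.σ D.π D.v Λ := hV
      have hnis' := (hc1 Λ hV'.1).mp hnis
      obtain ⟨ε, f, hε, hfR, hEq⟩ :=
        surj_classify hj0 hQc R hRO hRrep hV' hnis'.1 hnis'.2 hn
      refine ⟨(if ε = 1 then true else false, fun k => ⟨f k, hfR k k.2⟩), ?_⟩
      have hee : (if (if ε = 1 then true else false) then (1:F) else -1) = ε := by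
        rcases hε with rfl | rfl
        · simp
        · simp [neg_one_ne_one h2]
      have hde : D.dsum (fun k => D.fixel (ext (fun k => (⟨f k, hfR k k.2⟩ :
          {r // r ∈ R})) k)) n = D.dsum (fun k => D.fixel (f k)) n := by
        refine dsum_congr n (fun k hk => ?_)
        simp only [ext, dif_pos hk]
      show spanL D.v c (D.Wv c j (κf _)) = Λ
      have hκeq : κf (if ε = 1 then true else false, fun k => (⟨f k, hfR k k.2⟩ :
          {r // r ∈ R})) = ε * D.Mu (D.dsum (fun k => D.fixel (f k)) n) := by
        show (if (if ε = 1 then true else false) then (1:F) else -1) *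
          D.Mu (D.dsum (fun k => D.fixel (ext (fun k => (⟨f k, hfR k k.2⟩ :
            {r // r ∈ R})) k)) n) = _
        rw [hee, hde]
      rw [hκeq, ← hEq]
    · rintro ⟨p, rfl⟩
      have hvertex : IsVertex2 D.σ D.π D.v (Φ p) := Wv_vertex2 hj0 hQc (hκnorm p)
      refine ⟨hvertex, ?_⟩
      have : nIs D.π b (Φ p) (α - j) := by
        rw [hc1 _ hvertex.1]
        exact ⟨mem_spanL_left _ _, Wv_pic_not_mem hQc (norm_one_unit (hκnorm p))⟩
      exact this
  have hinj : Function.Injective Φ := by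
    intro p p' hpp
    have hpp' : spanL D.v c (D.Wv c j ((if p.1 then (1:F) else -1) *
        D.Mu (D.dsum (fun k => D.fixel (ext p.2 k)) n)))
        = spanL D.v c (D.Wv c j ((if p'.1 then (1:F) else -1) *
        D.Mu (D.dsum (fun k => D.fixel (ext p'.2 k)) n))) := hpp
    obtain ⟨hee, hff⟩ := inj_classify hj0 hQc R hRO hRrep (hεp p.1) (hεp p'.1)
      (fun k hk => hextR p.2 k hk) (fun k hk => hextR p'.2 k hk) hn hpp'
    have hb1 : p.1 = p'.1 := by
      cases hp : p.1 <;> cases hp' : p'.1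
      · rfl
      · rw [hp, hp'] at hee
        simp only [if_false, if_true] at hee
        exact absurd hee (neg_one_ne_one h2)
      · rw [hp, hp'] at hee
        simp only [if_false, if_true] at hee
        exact absurd hee.symm (neg_one_ne_one h2)
      · rfl
    have hb2 : p.2 = p'.2 := by
      funext k
      refine Subtype.ext ?_
      have := hff k k.2
      simpa only [ext, dif_pos k.2] using this
    exact Prod.ext hb1 hb2
  constructor
  · rw [hrange]
    exact Set.finite_range Φ
  · rw [hrange]
    calc Nat.card ↥(Set.range Φ) = Nat.card (Bool × (Fin n → {r // r ∈ R})) :=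
          (Nat.card_congr (Equiv.ofInjective Φ hinj)).symm
    _ = 2 * q ^ n := by
        rw [Nat.card_eq_fintype_card, Fintype.card_prod, Fintype.card_bool,
          Fintype.card_fun, Fintype.card_coe, hRcard, Fintype.card_fin]
end
end

section
/- Let b ∈ C with b ≠ 0 and q(b) = 0, and let Λ be a type-2 vertex lattice with b ∈ Λ \ πΛ. Then there exists b' ∈ Λ with h(b',b') = 0 and h(b,b') = π⁻¹, and for any such b' one has Λ = O_F·b + O_F·b'; in particular, every type-2 vertex lattice containing a nonzero isotropic vector primitively has an O_F-basis with Gram matrix [[0, π⁻¹],[−π⁻¹, 0]]. -/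
noncomputable section

attribute [local instance] Classical.propDecidable

variable {F : Type} [Field F]

/-!
Since `Λ^♯ = πΛ`, the values `π · h(x, y)` are integral on `Λ`, and `b ∉ πΛ = Λ^♯` provides
`y ∈ Λ` with `h(b, y)` non-integral, hence of valuation exactly `-1`. Rescaling `y` by a unit
makes `h(b, y) = π⁻¹`, and adding the integral multiple `-(π h(y, y) / 2) · b` of the isotropic
vector `b` kills `h(y, y)`. Conversely, if `b'` is isotropic with `h(b, b') = π⁻¹`, the
coordinates of `x ∈ Λ` in the basis `b, b'` are `π h(x, b')` and `-π h(x, b)`, hence integral.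
-/

section Herm

variable (σ : F →+* F)

lemma herm_smul_left (a : F) (x y : F × F) : herm σ (a • x) y = a * herm σ x y := by
  simp only [herm, Prod.smul_fst, Prod.smul_snd, smul_eq_mul]; ring

lemma herm_smul_right (a : F) (x y : F × F) : herm σ x (a • y) = σ a * herm σ x y := by
  simp only [herm, Prod.smul_fst, Prod.smul_snd, smul_eq_mul, map_mul]; ring

lemma herm_add_left (x x' y : F × F) : herm σ (x + x') y = herm σ x y + herm σ x' y := by
  simp only [herm, Prod.fst_add, Prod.snd_add]; ring

lemma herm_add_right (x y y' : F × F) : herm σ x (y + y') = herm σ x y + herm σ x y' := by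
  simp only [herm, Prod.fst_add, Prod.snd_add, map_add]; ring

lemma herm_swap (hinv : ∀ x, σ (σ x) = x) (x y : F × F) : herm σ y x = σ (herm σ x y) := by
  simp only [herm, map_add, map_mul, hinv]; ring

lemma herm_swap_eq_neg_inv (hinv : ∀ x, σ (σ x) = x) {π : F} (hσπ : σ π = -π)
    {x y : F × F} (hxy : herm σ x y = π⁻¹) : herm σ y x = -π⁻¹ := by
  rw [herm_swap σ hinv, hxy, map_inv₀, hσπ, inv_neg]

end Herm

section Valuation

variable {v : F → ℤ}

lemma v_one (hvmul : ∀ x y : F, x ≠ 0 → y ≠ 0 → v (x * y) = v x + v y) : v 1 = 0 := by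
  have h := hvmul 1 1 one_ne_zero one_ne_zero
  rw [one_mul] at h; omega

lemma v_inv (hvmul : ∀ x y : F, x ≠ 0 → y ≠ 0 → v (x * y) = v x + v y) {x : F} (hx : x ≠ 0) :
    v x⁻¹ = -v x := by
  have h := hvmul x x⁻¹ hx (inv_ne_zero hx)
  rw [mul_inv_cancel₀ hx, v_one hvmul] at h; omega

lemma inO_one (hvmul : ∀ x y : F, x ≠ 0 → y ≠ 0 → v (x * y) = v x + v y) : inO v 1 :=
  Or.inr (v_one hvmul).ge

lemma inO_mul (hvmul : ∀ x y : F, x ≠ 0 → y ≠ 0 → v (x * y) = v x + v y) {x y : F}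
    (hx : inO v x) (hy : inO v y) : inO v (x * y) := by
  by_cases hx0 : x = 0; · simp [inO, hx0]
  by_cases hy0 : y = 0; · simp [inO, hy0]
  have := hx.resolve_left hx0
  have := hy.resolve_left hy0
  exact Or.inr (by rw [hvmul x y hx0 hy0]; omega)

lemma inO_neg (hvmul : ∀ x y : F, x ≠ 0 → y ≠ 0 → v (x * y) = v x + v y) {x : F}
    (hx : inO v x) : inO v (-x) := by
  have hv : v (-1 : F) = 0 := by
    have h := hvmul (-1) (-1) (neg_ne_zero.2 one_ne_zero) (neg_ne_zero.2 one_ne_zero)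
    rw [neg_mul_neg, one_mul, v_one hvmul] at h; omega
  simpa using inO_mul hvmul (Or.inr hv.ge) hx

lemma inO_add (hvadd : ∀ x y : F, x ≠ 0 → y ≠ 0 → x + y ≠ 0 → min (v x) (v y) ≤ v (x + y))
    {x y : F} (hx : inO v x) (hy : inO v y) : inO v (x + y) := by
  by_cases hx0 : x = 0; · simpa [hx0] using hy
  by_cases hy0 : y = 0; · simpa [hy0] using hx
  by_cases hxy : x + y = 0; · exact Or.inl hxy
  exact Or.inr <|
    (le_min (hx.resolve_left hx0) (hy.resolve_left hy0)).trans (hvadd x y hx0 hy0 hxy)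

lemma v_eq_neg_one_of_not_inO (hvmul : ∀ x y : F, x ≠ 0 → y ≠ 0 → v (x * y) = v x + v y)
    {π : F} (hπ : π ≠ 0) (hvπ : v π = 1) {x : F} (hx : ¬ inO v x) (hπx : inO v (π * x)) :
    v x = -1 := by
  have hx0 : x ≠ 0 := fun h => hx (Or.inl h)
  have hneg : ¬ 0 ≤ v x := fun h => hx (Or.inr h)
  have := hπx.resolve_left (mul_ne_zero hπ hx0)
  rw [hvmul π x hπ hx0, hvπ] at this
  omega

end Valuation

section Lattice

variable {σ : F →+* F} {π : F} {v : F → ℤ} {Λ : Set (F × F)}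

lemma spanL_smul_add_smul_mem (hvmul : ∀ x y : F, x ≠ 0 → y ≠ 0 → v (x * y) = v x + v y)
    (hvadd : ∀ x y : F, x ≠ 0 → y ≠ 0 → x + y ≠ 0 → min (v x) (v y) ≤ v (x + y))
    {u w x y : F × F} (hx : x ∈ spanL v u w) (hy : y ∈ spanL v u w) {a c : F}
    (ha : inO v a) (hc : inO v c) : a • x + c • y ∈ spanL v u w := by
  obtain ⟨a₁, c₁, ha₁, hc₁, rfl⟩ := hx
  obtain ⟨a₂, c₂, ha₂, hc₂, rfl⟩ := hy
  refine ⟨a * a₁ + c * a₂, a * c₁ + c * c₂, ?_, ?_, by module⟩ <;>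
    exact inO_add hvadd (inO_mul hvmul ha ‹_›) (inO_mul hvmul hc ‹_›)

lemma LinearIndependent.exists_smul_add_smul_eq {K V : Type*} [Field K] [AddCommGroup V]
    [Module K V] (hV : Module.finrank K V = 2) {u w : V} (huw : LinearIndependent K ![u, w])
    (x : V) : ∃ α β : K, α • u + β • w = x := by
  have hspan := huw.span_eq_top_of_card_eq_finrank (by simp [hV])
  rw [Matrix.range_cons, Matrix.range_cons, Matrix.range_empty, Set.union_empty,
    Set.singleton_union] at hspan
  exact Submodule.mem_span_pair.1 (hspan ▸ Submodule.mem_top)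

lemma linearIndependent_pair_of_herm {σ : F →+* F} {u w : F × F} (huw : herm σ u w ≠ 0)
    (hww : herm σ w w = 0) : LinearIndependent F ![u, w] := by
  rw [LinearIndependent.pair_iff]
  intro s t hst
  have hpair : s * herm σ u w = 0 := by
    have h := congrArg (herm σ · w) hst
    rw [herm_add_left, herm_smul_left, herm_smul_left, hww, mul_zero, add_zero] at h
    simpa [herm] using h
  have hs : s = 0 := (mul_eq_zero.1 hpair).resolve_right huw
  have hw0 : w ≠ 0 := by rintro rfl; simp [herm] at huw
  subst hs
  exact ⟨rfl, (smul_eq_zero.1 (by simpa using hst)).resolve_right hw0⟩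

namespace IsVertex2

lemma smul_add_smul_mem (hΛ : IsVertex2 σ π v Λ)
    (hvmul : ∀ x y : F, x ≠ 0 → y ≠ 0 → v (x * y) = v x + v y)
    (hvadd : ∀ x y : F, x ≠ 0 → y ≠ 0 → x + y ≠ 0 → min (v x) (v y) ≤ v (x + y))
    {x y : F × F} (hx : x ∈ Λ) (hy : y ∈ Λ) {a c : F} (ha : inO v a) (hc : inO v c) :
    a • x + c • y ∈ Λ := by
  obtain ⟨⟨u, w, -, rfl⟩, -⟩ := hΛ
  exact spanL_smul_add_smul_mem hvmul hvadd hx hy ha hc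

lemma inO_mul_herm (hΛ : IsVertex2 σ π v Λ) {x y : F × F} (hx : x ∈ Λ) (hy : y ∈ Λ) :
    inO v (π * herm σ x y) := by
  have hπx : π • x ∈ dualL σ v Λ := hΛ.2 ▸ ⟨x, hx, rfl⟩
  simpa only [herm_smul_left] using hπx y hy

lemma exists_not_inO_herm (hΛ : IsVertex2 σ π v Λ) {b : F × F}
    (hbout : b ∉ (fun x => π • x) '' Λ) : ∃ y ∈ Λ, ¬ inO v (herm σ b y) := by
  rw [← hΛ.2] at hbout
  simpa [dualL] using hbout

lemma exists_herm_eq_inv (hΛ : IsVertex2 σ π v Λ) (hinv : ∀ x, σ (σ x) = x) (hπ : π ≠ 0)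
    (hvπ : v π = 1) (hvσ : ∀ x, v (σ x) = v x)
    (hvmul : ∀ x y : F, x ≠ 0 → y ≠ 0 → v (x * y) = v x + v y)
    (hvadd : ∀ x y : F, x ≠ 0 → y ≠ 0 → x + y ≠ 0 → min (v x) (v y) ≤ v (x + y))
    {b : F × F} (hb : b ∈ Λ) (hbout : b ∉ (fun x => π • x) '' Λ) :
    ∃ y ∈ Λ, herm σ b y = π⁻¹ := by
  obtain ⟨y, hy, hby⟩ := hΛ.exists_not_inO_herm hbout
  have hvc : v (herm σ b y) = -1 :=
    v_eq_neg_one_of_not_inO hvmul hπ hvπ hby (hΛ.inO_mul_herm hb hy)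
  have hc0 : herm σ b y ≠ 0 := fun h => hby (Or.inl h)
  have hπc : π * herm σ b y ≠ 0 := mul_ne_zero hπ hc0
  have hunit : inO v (σ (π * herm σ b y)⁻¹) :=
    Or.inr (by rw [hvσ, v_inv hvmul hπc, hvmul π _ hπ hc0, hvπ, hvc]; norm_num)
  refine ⟨σ (π * herm σ b y)⁻¹ • y + (0 : F) • b,
    hΛ.smul_add_smul_mem hvmul hvadd hy hb hunit (Or.inl rfl), ?_⟩
  rw [zero_smul, add_zero, herm_smul_right, hinv]
  field_simp

lemma exists_isotropic_herm_eq_inv (hΛ : IsVertex2 σ π v Λ) (hinv : ∀ x, σ (σ x) = x)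
    (hσπ : σ π = -π) (hπ : π ≠ 0) (h2 : (2 : F) ≠ 0) (hv2 : v (2 : F) = 0)
    (hvmul : ∀ x y : F, x ≠ 0 → y ≠ 0 → v (x * y) = v x + v y)
    (hvadd : ∀ x y : F, x ≠ 0 → y ≠ 0 → x + y ≠ 0 → min (v x) (v y) ≤ v (x + y))
    {b y : F × F} (hb : b ∈ Λ) (hbb : herm σ b b = 0) (hy : y ∈ Λ) (hby : herm σ b y = π⁻¹) :
    ∃ b' ∈ Λ, herm σ b' b' = 0 ∧ herm σ b b' = π⁻¹ := by
  set d := herm σ y y with hd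
  have hσd : σ d = d := (herm_swap σ hinv y y).symm
  set t := -(2⁻¹ * (π * d)) with ht
  have htO : inO v t := inO_neg hvmul <|
    inO_mul hvmul (Or.inr (by rw [v_inv hvmul h2, hv2]; rfl)) (hΛ.inO_mul_herm hy hy)
  refine ⟨(1 : F) • y + t • b, hΛ.smul_add_smul_mem hvmul hvadd hy hb (inO_one hvmul) htO, ?_, ?_⟩
  · simp only [one_smul, herm_add_left, herm_add_right, herm_smul_left, herm_smul_right, hbb, hby,
      herm_swap_eq_neg_inv σ hinv hσπ hby, ← hd, ht, map_neg, map_mul, map_inv₀, map_ofNat, hσπ,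
      hσd]
    field_simp
    ring
  · rw [one_smul, herm_add_right, herm_smul_right, hbb, mul_zero, add_zero, hby]

lemma eq_spanL (hΛ : IsVertex2 σ π v Λ) (hinv : ∀ x, σ (σ x) = x) (hσπ : σ π = -π) (hπ : π ≠ 0)
    (hvmul : ∀ x y : F, x ≠ 0 → y ≠ 0 → v (x * y) = v x + v y)
    (hvadd : ∀ x y : F, x ≠ 0 → y ≠ 0 → x + y ≠ 0 → min (v x) (v y) ≤ v (x + y))
    {b z : F × F} (hb : b ∈ Λ) (hz : z ∈ Λ) (hbb : herm σ b b = 0) (hzz : herm σ z z = 0)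
    (hbz : herm σ b z = π⁻¹) : Λ = spanL v b z := by
  have hli := linearIndependent_pair_of_herm (hbz ▸ inv_ne_zero hπ) hzz
  ext x
  refine ⟨fun hx => ?_, ?_⟩
  · obtain ⟨α, β, rfl⟩ := hli.exists_smul_add_smul_eq (by simp) x
    have hα : π * herm σ (α • b + β • z) z = α := by
      rw [herm_add_left, herm_smul_left, herm_smul_left, hbz, hzz]; field_simp; ring
    have hβ : -(π * herm σ (α • b + β • z) b) = β := by
      rw [herm_add_left, herm_smul_left, herm_smul_left, hbb, herm_swap_eq_neg_inv σ hinv hσπ hbz]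
      field_simp; ring
    exact ⟨α, β, hα ▸ hΛ.inO_mul_herm hx hz, hβ ▸ inO_neg hvmul (hΛ.inO_mul_herm hx hb), rfl⟩
  · rintro ⟨α, β, hα, hβ, rfl⟩
    exact hΛ.smul_add_smul_mem hvmul hvadd hb hz hα hβ

end IsVertex2

end Lattice
theorem statement17_general
    (σ : F →+* F) (π : F) (v : F → ℤ)
    (hinv : ∀ x, σ (σ x) = x)
    (hσπ : σ π = -π)
    (hπ : π ≠ 0)
    (h2 : (2 : F) ≠ 0)
    (hvπ : v π = 1)
    (hv2 : v (2 : F) = 0)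
    (hvσ : ∀ x, v (σ x) = v x)
    (hvmul : ∀ x y : F, x ≠ 0 → y ≠ 0 → v (x * y) = v x + v y)
    (hvadd : ∀ x y : F, x ≠ 0 → y ≠ 0 → x + y ≠ 0 → min (v x) (v y) ≤ v (x + y))
    (b : F × F) (hiso : herm σ b b = 0)
    (Λ : Set (F × F)) (hΛ : IsVertex2 σ π v Λ)
    (hbin : b ∈ Λ) (hbout : b ∉ (fun x => π • x) '' Λ) :
    (∃ b' ∈ Λ, herm σ b' b' = 0 ∧ herm σ b b' = π⁻¹) ∧
    (∀ b' ∈ Λ, herm σ b' b' = 0 → herm σ b b' = π⁻¹ →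
      LinearIndependent F ![b, b'] ∧ Λ = spanL v b b') ∧
    (∃ w₀ w₁ : F × F, LinearIndependent F ![w₀, w₁] ∧ Λ = spanL v w₀ w₁ ∧
      herm σ w₀ w₀ = 0 ∧ herm σ w₁ w₁ = 0 ∧
      herm σ w₀ w₁ = π⁻¹ ∧ herm σ w₁ w₀ = -π⁻¹) := by
  obtain ⟨y, hy, hby⟩ := hΛ.exists_herm_eq_inv hinv hπ hvπ hvσ hvmul hvadd hbin hbout
  obtain ⟨b', hb', hb'b', hbb'⟩ :=
    hΛ.exists_isotropic_herm_eq_inv hinv hσπ hπ h2 hv2 hvmul hvadd hbin hiso hy hby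
  have hbasis : ∀ z ∈ Λ, herm σ z z = 0 → herm σ b z = π⁻¹ →
      LinearIndependent F ![b, z] ∧ Λ = spanL v b z := fun z hz hzz hbz =>
    ⟨linearIndependent_pair_of_herm (hbz ▸ inv_ne_zero hπ) hzz,
      hΛ.eq_spanL hinv hσπ hπ hvmul hvadd hbin hz hiso hzz hbz⟩
  obtain ⟨hli, hspan⟩ := hbasis b' hb' hb'b' hbb'
  exact ⟨⟨b', hb', hb'b', hbb'⟩, hbasis,
    b, b', hli, hspan, hiso, hb'b', hbb', herm_swap_eq_neg_inv σ hinv hσπ hbb'⟩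

theorem statement17
    (σ : F →+* F) (π : F) (v : F → ℤ)
    (hinv : ∀ x, σ (σ x) = x)
    (hσπ : σ π = -π)
    (hπ : π ≠ 0)
    (h2 : (2 : F) ≠ 0)
    (hvπ : v π = 1)
    (hv2 : v (2 : F) = 0)
    (hvσ : ∀ x, v (σ x) = v x)
    (hvmul : ∀ x y : F, x ≠ 0 → y ≠ 0 → v (x * y) = v x + v y)
    (hvadd : ∀ x y : F, x ≠ 0 → y ≠ 0 → x + y ≠ 0 → min (v x) (v y) ≤ v (x + y))
    (heven : ∀ x : F, σ x = x → x ≠ 0 → Even (v x))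
    (b : F × F) (hb0 : b ≠ 0) (hiso : herm σ b b = 0)
    (Λ : Set (F × F)) (hΛ : IsVertex2 σ π v Λ)
    (hbin : b ∈ Λ) (hbout : b ∉ (fun x => π • x) '' Λ) :
    (∃ b' ∈ Λ, herm σ b' b' = 0 ∧ herm σ b b' = π⁻¹) ∧
    (∀ b' ∈ Λ, herm σ b' b' = 0 → herm σ b b' = π⁻¹ →
      LinearIndependent F ![b, b'] ∧ Λ = spanL v b b') ∧
    (∃ w₀ w₁ : F × F, LinearIndependent F ![w₀, w₁] ∧ Λ = spanL v w₀ w₁ ∧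
      herm σ w₀ w₀ = 0 ∧ herm σ w₁ w₁ = 0 ∧
      herm σ w₀ w₁ = π⁻¹ ∧ herm σ w₁ w₀ = -π⁻¹) :=
  statement17_general σ π v hinv hσπ hπ h2 hvπ hv2 hvσ hvmul hvadd b hiso Λ hΛ hbin hbout
end
end
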